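/- arXiv:2301.06546 — 9 statements merged into one kernel-verified Lean document; each statement's English description precedes it below -/
import Mathlib

section
/- Let (A, m) be a local ring and f(X) = Σ_{k=0}^n a_k X^k ∈ A[X] with a₀ ∈ m and a₁ a unit. Define the polynomial g(X) = Xⁿ - X^{n-1} + a₀·(Σ_{j=2}^n (-1)^j a_j a₀^{j-2} a₁^{-j} X^{n-j}). Then the identity a₀ g(X) = Xⁿ f(-a₀ a₁⁻¹ / X) holds in the localization A[X, 1/X]. -/
open Polynomial LaurentPolynomial IsLocalRing Finset

/-- The key identity `a₀ · g(X) = Xⁿ · f(-a₀a₁⁻¹/X)` in `A[X, 1/X]`, where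
`f = Σ_{k=0}^n a_k X^k` with `a₀ ∈ m`, `a₁` invertible with inverse `b`, and
`g = Xⁿ - X^{n-1} + a₀ · Σ_{j=2}^n (-1)^j a_j a₀^{j-2} a₁^{-j} X^{n-j}`. -/
theorem special_polynomial_identity {A : Type*} [CommRing A] [IsLocalRing A]
    (n : ℕ) (hn : 1 ≤ n) (a : ℕ → A) (b : A)
    (ha0 : a 0 ∈ maximalIdeal A) (hb : a 1 * b = 1)
    (g : Polynomial A)
    (hg : g = Polynomial.X ^ n - Polynomial.X ^ (n - 1) +
      Polynomial.C (a 0) * ∑ j ∈ Finset.Icc 2 n,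
        Polynomial.C ((-1) ^ j * a j * a 0 ^ (j - 2) * b ^ j) * Polynomial.X ^ (n - j)) :
    LaurentPolynomial.C (a 0) * g.toLaurent =
      LaurentPolynomial.T (n : ℤ) *
        ∑ k ∈ Finset.range (n + 1),
          LaurentPolynomial.C (a k * (-(a 0 * b)) ^ k) * LaurentPolynomial.T (-(k : ℤ)) := by
  subst hg
  have hrange : Finset.range (n+1) = insert 0 (insert 1 (Finset.Icc 2 n)) := by
    ext k; simp only [Finset.mem_range, Finset.mem_insert, Finset.mem_Icc]; omega
  rw [hrange, Finset.sum_insert (by simp), Finset.sum_insert (by simp)]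
  simp only [map_add, map_sub, map_mul, map_sum, Polynomial.toLaurent_C,
    Polynomial.toLaurent_X_pow, pow_zero, pow_one, mul_one, Nat.cast_zero, neg_zero, T_zero,
    Nat.cast_one]
  rw [mul_add, mul_add, mul_sub, Finset.mul_sum, Finset.mul_sum]
  have key : ∀ j ∈ Finset.Icc 2 n,
      LaurentPolynomial.C (a 0) * (LaurentPolynomial.C (a 0) *
        (LaurentPolynomial.C ((-1 : A) ^ j) * LaurentPolynomial.C (a j) *
          LaurentPolynomial.C (a 0 ^ (j - 2)) * LaurentPolynomial.C (b ^ j) *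
          T ((n - j : ℕ) : ℤ))) =
      T (n : ℤ) * (LaurentPolynomial.C (a j) * LaurentPolynomial.C ((-(a 0 * b)) ^ j) *
        T (-(j : ℤ))) := by
    intro j hj
    simp only [Finset.mem_Icc] at hj
    rw [show ((n - j : ℕ) : ℤ) = (n : ℤ) + (-(j : ℤ)) by omega, T_add]
    simp only [← map_mul]
    have h2 : a 0 * a 0 * a 0 ^ (j - 2) = a 0 ^ j := by
      rw [← pow_two, ← pow_add]; congr 1; omega
    have hsc : a 0 * (a 0 * ((-1 : A) ^ j * a j * a 0 ^ (j - 2) * b ^ j)) =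
        a j * (-(a 0 * b)) ^ j := by
      rw [show (-(a 0 * b))^j = (-1 : A)^j * (a 0 ^ j * b ^ j) by rw [neg_pow, mul_pow]]
      linear_combination ((-1 : A) ^ j * a j * b ^ j) * h2
    calc LaurentPolynomial.C (a 0) * (LaurentPolynomial.C (a 0) *
          (LaurentPolynomial.C ((-1 : A) ^ j * a j * a 0 ^ (j - 2) * b ^ j) *
            (T (n : ℤ) * T (-(j : ℤ)))))
        = LaurentPolynomial.C (a 0 * (a 0 * ((-1 : A) ^ j * a j * a 0 ^ (j - 2) * b ^ j))) *
            (T (n : ℤ) * T (-(j : ℤ))) := by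
          simp only [map_mul]; ring
      _ = _ := by rw [hsc, map_mul]; ring
  rw [Finset.sum_congr rfl key]
  have hmid : T (n : ℤ) * (LaurentPolynomial.C (a 1) * LaurentPolynomial.C (-(a 0 * b)) *
      T (-(1:ℤ))) = -(LaurentPolynomial.C (a 0) * T ((n - 1 : ℕ) : ℤ)) := by
    rw [show ((n-1 : ℕ) : ℤ) = (n:ℤ) + (-(1:ℤ)) by omega]
    have h1 : a 1 * -(a 0 * b) = -(a 0) := by
      linear_combination (-(a 0)) * hb
    rw [← map_mul, h1, map_neg, T_add]
    ring
  rw [mul_add, Finset.mul_sum, hmid]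
  ring
end

section
/- Let (A, m) be a local ring, f(X) = Σ_{k=0}^n a_k X^k ∈ A[X] with a₀ ∈ m and a₁ a unit, and suppose δ ∈ A is a unit with g(δ) = 0 where g(X) = Xⁿ - X^{n-1} + a₀·(Σ_{j=2}^n (-1)^j a_j a₀^{j-2} a₁^{-j} X^{n-j}). Then γ := -a₀(a₁δ)⁻¹ satisfies f(γ) = 0, γ ∈ a₀A ⊆ m, and f'(γ) is a unit. (Hervé's trick.) -/
open Polynomial IsLocalRing Finset

/-- Hervé's trick: if `f = Σ_{k=0}^n a_k X^k` with `a₀ ∈ m` and `a₁` invertible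
(with inverse `b`), and `δ` is an invertible element (with inverse `e`) which is a zero of the
special polynomial `g`, then `γ = -a₀(a₁δ)⁻¹` is a zero of `f`, lies in `a₀A ⊆ m`, and
`f'(γ)` is invertible. -/
theorem herve_trick {A : Type*} [CommRing A] [IsLocalRing A]
    (n : ℕ) (hn : 1 ≤ n) (a : ℕ → A) (b : A)
    (ha0 : a 0 ∈ maximalIdeal A) (hb : a 1 * b = 1)
    (f : Polynomial A)
    (hf : f = ∑ k ∈ Finset.range (n + 1), Polynomial.C (a k) * Polynomial.X ^ k)
    (g : Polynomial A)
    (hg : g = Polynomial.X ^ n - Polynomial.X ^ (n - 1) +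
      Polynomial.C (a 0) * ∑ j ∈ Finset.Icc 2 n,
        Polynomial.C ((-1) ^ j * a j * a 0 ^ (j - 2) * b ^ j) * Polynomial.X ^ (n - j))
    (δ e : A) (hδ : δ * e = 1) (hgδ : g.eval δ = 0)
    (γ : A) (hγ : γ = -(a 0) * (b * e)) :
    f.eval γ = 0 ∧ γ ∈ Ideal.span {a 0} ∧ γ ∈ maximalIdeal A ∧
      IsUnit (f.derivative.eval γ) := by
  have hγm : γ ∈ maximalIdeal A := by
    rw [hγ, neg_mul]
    exact neg_mem (Ideal.mul_mem_right _ _ ha0)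
  have hspan : γ ∈ Ideal.span {a 0} := by
    rw [Ideal.mem_span_singleton, hγ]
    exact ⟨-(b * e), by ring⟩
  have hpow : ∀ j, j ≤ n → δ ^ (n - j) * e ^ n = e ^ j := by
    intro j hj
    have h1 : e ^ n = e ^ (n - j) * e ^ j := by
      rw [← pow_add, Nat.sub_add_cancel hj]
    rw [h1, ← mul_assoc, ← mul_pow, hδ, one_pow, one_mul]
  -- key identity
  have hsplit : ∀ c : ℕ → A, ∑ k ∈ Finset.range (n + 1), c k
      = (c 0 + c 1) + ∑ k ∈ Finset.Icc 2 n, c k := by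
    intro c
    rw [Finset.range_eq_Ico,
      ← Finset.sum_Ico_consecutive _ (by omega : 0 ≤ 2) (by omega : 2 ≤ n + 1),
      ← Finset.Ico_add_one_right_eq_Icc]
    congr 1
    rw [show Finset.Ico 0 2 = Finset.range 2 from rfl, Finset.sum_range_succ,
      Finset.sum_range_one]
  have hfg : f.eval γ = a 0 * e ^ n * g.eval δ := by
    rw [hf, hg]
    simp only [eval_finset_sum, eval_mul, eval_pow, eval_C, eval_X, eval_add, eval_sub]
    rw [hsplit (fun k => a k * γ ^ k)]
    have h1 : (δ * e) ^ n = 1 := by rw [hδ, one_pow]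
    rw [mul_add, mul_sub, Finset.mul_sum, Finset.mul_sum]
    have hterm : ∀ j ∈ Finset.Icc 2 n,
        a j * γ ^ j = a 0 * e ^ n * (a 0 * ((-1) ^ j * a j * a 0 ^ (j - 2) * b ^ j * δ ^ (n - j))) := by
      intro j hj
      obtain ⟨hj2, hjn⟩ := Finset.mem_Icc.mp hj
      have ha0j : a 0 ^ j = a 0 ^ 2 * a 0 ^ (j - 2) := by
        rw [← pow_add]; congr 1; omega
      have hej := hpow j hjn
      calc a j * γ ^ j = (-1) ^ j * a j * a 0 ^ j * b ^ j * e ^ j := by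
            rw [hγ]; ring
        _ = (-1) ^ j * a j * (a 0 ^ 2 * a 0 ^ (j - 2)) * b ^ j * (δ ^ (n - j) * e ^ n) := by
            rw [← ha0j, hej]
        _ = a 0 * e ^ n * (a 0 * ((-1) ^ j * a j * a 0 ^ (j - 2) * b ^ j * δ ^ (n - j))) := by
            ring
    rw [Finset.sum_congr rfl hterm]
    have h2 : a 0 * e ^ n * δ ^ n = a 0 := by
      rw [mul_assoc, mul_comm (e ^ n), ← mul_pow, hδ, one_pow, mul_one]
    have h3 : a 0 * e ^ n * δ ^ (n - 1) = a 0 * e := by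
      rw [mul_assoc, mul_comm (e ^ n), hpow 1 hn, pow_one]
    have h4 : a 0 + a 1 * γ = a 0 - a 0 * e := by
      rw [hγ]
      calc a 0 + a 1 * (-(a 0) * (b * e)) = a 0 - a 1 * b * (a 0 * e) := by ring
        _ = a 0 - a 0 * e := by rw [hb, one_mul]
    rw [h2, h3]
    simp only [pow_zero, pow_one, mul_one]
    rw [h4]
  refine ⟨by rw [hfg, hgδ, mul_zero], hspan, hγm, ?_⟩
  -- derivative
  have hd : f.derivative.eval γ = ∑ k ∈ Finset.range (n + 1), a k * k * γ ^ (k - 1) := by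
    rw [hf]
    simp only [derivative_sum, derivative_C_mul_X_pow, eval_finset_sum, eval_mul, eval_pow,
      eval_C, eval_X]
  have hmem : f.derivative.eval γ - a 1 ∈ maximalIdeal A := by
    rw [hd, hsplit (fun k => a k * k * γ ^ (k - 1))]
    push_cast
    simp only [mul_zero, zero_mul, zero_add, Nat.sub_self, pow_zero, mul_one]
    rw [add_sub_cancel_left]
    refine Ideal.sum_mem _ fun k hk => ?_
    obtain ⟨hk2, _⟩ := Finset.mem_Icc.mp hk
    exact Ideal.mul_mem_left _ _ (Ideal.pow_mem_of_mem _ hγm _ (by omega))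
  by_contra hu
  have : f.derivative.eval γ ∈ maximalIdeal A := hu
  have ha1 : a 1 ∈ maximalIdeal A := by
    have := sub_mem this hmem
    simpa using this
  exact ha1 (IsUnit.of_mul_eq_one _ hb)
end

section
/- If (A, m) is a local ring in which every polynomial of the form Xⁿ - X^{n-1} + Σ_{k=0}^{n-2} c_k X^k with all c_k ∈ m has a root in 1 + m, then every f ∈ A[X] with constant coefficient in m and linear coefficient a unit has a root in m, and this root is unique in m. -/
open Polynomial IsLocalRing Finset

/-- In a local ring, a unit plus an element of the maximal ideal is a unit. -/
lemma aux_isUnit_add_mem {A : Type*} [CommRing A] [IsLocalRing A] {a s : A}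
    (ha : IsUnit a) (hs : s ∈ maximalIdeal A) : IsUnit (a + s) := by
  by_contra h
  have hmem : a + s ∈ maximalIdeal A := by
    rw [IsLocalRing.mem_maximalIdeal, mem_nonunits_iff]; exact h
  have : a ∈ maximalIdeal A := by
    have := Ideal.sub_mem _ hmem hs
    simpa using this
  rw [IsLocalRing.mem_maximalIdeal, mem_nonunits_iff] at this
  exact this ha

/-- Uniqueness: two roots in the maximal ideal coincide when the linear coefficient
is a unit. -/
lemma aux_root_unique {A : Type*} [CommRing A] [IsLocalRing A] (f : Polynomial A)
    (h1 : IsUnit (f.coeff 1)) {y z : A} (hy : y ∈ maximalIdeal A) (hz : z ∈ maximalIdeal A)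
    (hfy : f.eval y = 0) (hfz : f.eval z = 0) : y = z := by
  set r := f.divX.divX with hr
  have hf : ∀ w : A, f.eval w = (r.eval w * w + f.coeff 1) * w + f.coeff 0 := by
    intro w
    conv_lhs => rw [← f.divX_mul_X_add, ← f.divX.divX_mul_X_add]
    simp [f.coeff_divX]
    rfl
  obtain ⟨q, hq⟩ := Polynomial.sub_dvd_eval_sub y z r
  rw [hf] at hfy hfz
  have key : (y - z) * (f.coeff 1 + (q * y ^ 2 + r.eval z * (y + z))) = 0 := by
    linear_combination hfy - hfz - y ^ 2 * hq
  have hu : IsUnit (f.coeff 1 + (q * y ^ 2 + r.eval z * (y + z))) := by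
    apply aux_isUnit_add_mem h1
    apply Ideal.add_mem
    · exact Ideal.mul_mem_left _ _ (Ideal.pow_mem_of_mem _ hy 2 (by norm_num))
    · exact Ideal.mul_mem_left _ _ (Ideal.add_mem _ hy hz)
  exact sub_eq_zero.mp ((IsUnit.mul_left_eq_zero hu).mp key)

/-- If every special polynomial `Xⁿ - X^{n-1} + Σ_{k=0}^{n-2} c_k X^k` (with the `c_k ∈ m`)
over the local ring `(A, m)` has a root in `1 + m`, then every polynomial with constant
coefficient in `m` and linear coefficient a unit has a unique root in `m`. -/
theorem root_in_m_of_special_roots {A : Type*} [CommRing A] [IsLocalRing A]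
    (hspec : ∀ (n : ℕ), 1 ≤ n → ∀ c : ℕ → A, (∀ k, c k ∈ maximalIdeal A) →
      ∃ x : A, x - 1 ∈ maximalIdeal A ∧
        (Polynomial.X ^ n - Polynomial.X ^ (n - 1) +
          ∑ k ∈ Finset.range (n - 1), Polynomial.C (c k) * Polynomial.X ^ k).eval x = 0)
    (f : Polynomial A) (h0 : f.coeff 0 ∈ maximalIdeal A) (h1 : IsUnit (f.coeff 1)) :
    ∃! x : A, x ∈ maximalIdeal A ∧ f.eval x = 0 := by
  set a₀ := f.coeff 0 with ha₀
  have hd : 1 ≤ f.natDegree := Polynomial.le_natDegree_of_ne_zero h1.ne_zero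
  obtain ⟨e, he⟩ : ∃ e, f.natDegree = e + 1 := ⟨f.natDegree - 1, by omega⟩
  set d := f.natDegree with hdd
  set v := h1.unit with hv
  have hv1 : (↑v : A) = f.coeff 1 := h1.unit_spec
  set c : ℕ → A := fun j =>
    if j + 2 ≤ d then f.coeff (d - j) * a₀ ^ (d - j - 1) * (-(↑v⁻¹ : A)) ^ (d - j) else 0
    with hc
  have hcm : ∀ k, c k ∈ maximalIdeal A := by
    intro k
    simp only [hc]
    split
    · next h =>
      apply Ideal.mul_mem_right
      exact Ideal.mul_mem_left _ _ (Ideal.pow_mem_of_mem _ h0 _ (by omega))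
    · exact Ideal.zero_mem _
  obtain ⟨x, hx1, hx2⟩ := hspec d hd c hcm
  have hxu : IsUnit x := by
    have := aux_isUnit_add_mem isUnit_one hx1
    simpa using this
  set u := hxu.unit with hu
  have hu1 : (↑u : A) = x := hxu.unit_spec
  have huu : (↑u⁻¹ : A) * x = 1 := by rw [← hu1]; exact u.inv_mul
  have hvv : (↑v⁻¹ : A) * f.coeff 1 = 1 := by rw [← hv1]; exact v.inv_mul
  set ρ := a₀ * (-(↑v⁻¹ : A) * ↑u⁻¹) with hρ
  have hρm : ρ ∈ maximalIdeal A := Ideal.mul_mem_right _ _ h0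
  have hE : x ^ d - x ^ (d - 1) + ∑ j ∈ Finset.range (d - 1), c j * x ^ j = 0 := by
    simpa [Polynomial.eval_finset_sum] using hx2
  have hρ0 : f.eval ρ = 0 := by
    rw [Polynomial.eval_eq_sum_range, ← hdd]
    have key : ∑ i ∈ Finset.range (d + 1), f.coeff i * ρ ^ i =
        a₀ * (↑u⁻¹ : A) ^ d *
          (x ^ d - x ^ (d - 1) + ∑ j ∈ Finset.range (d - 1), c j * x ^ j) := by
      rw [he]
      simp only [Nat.add_sub_cancel]
      rw [Finset.sum_range_succ', Finset.sum_range_succ']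
      rw [← Finset.sum_range_reflect (fun j => c j * x ^ j) e]
      rw [mul_add, mul_sub, Finset.mul_sum]
      have hterm : ∀ i ∈ Finset.range e,
          f.coeff (i + 1 + 1) * ρ ^ (i + 1 + 1) =
          a₀ * (↑u⁻¹ : A) ^ (e + 1) * (c (e - 1 - i) * x ^ (e - 1 - i)) := by
        intro i hi
        rw [Finset.mem_range] at hi
        have h1i : e - 1 - i + 2 ≤ e + 1 := by omega
        have h2i : e + 1 - (e - 1 - i) = i + 1 + 1 := by omega
        have h3i : e + 1 - (e - 1 - i) - 1 = i + 1 := by omega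
        rw [hc]
        simp only [← hdd, he, h1i, if_pos, h2i, h3i, Nat.add_sub_cancel]
        have hx' : x ^ (e - 1 - i) = (↑u : A) ^ (e - 1 - i) := by rw [hu1]
        rw [hx']
        have hui : (↑u⁻¹ : A) ^ (e + 1) * (↑u : A) ^ (e - 1 - i) = (↑u⁻¹ : A) ^ (i + 1 + 1) := by
          have hsplit : e + 1 = (i + 1 + 1) + (e - 1 - i) := by omega
          rw [hsplit, pow_add, mul_assoc, ← mul_pow, Units.inv_mul, one_pow, mul_one]
        calc f.coeff (i + 1 + 1) * ρ ^ (i + 1 + 1)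
            = f.coeff (i + 1 + 1) *
                (a₀ ^ (i + 1 + 1) * ((-(↑v⁻¹ : A)) ^ (i + 1 + 1) * (↑u⁻¹ : A) ^ (i + 1 + 1)))
              := by rw [hρ]; ring
          _ = a₀ * ((↑u⁻¹ : A) ^ (e + 1) * (↑u : A) ^ (e - 1 - i)) *
              (f.coeff (i + 1 + 1) * a₀ ^ (i + 1) * (-(↑v⁻¹ : A)) ^ (i + 1 + 1)) := by
              rw [hui]; ring
          _ = _ := by ring
      rw [Finset.sum_congr rfl hterm]
      have hxe : (↑u⁻¹ : A) ^ (e + 1) * x ^ (e + 1) = 1 := by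
        rw [← mul_pow, huu, one_pow]
      have hxe' : (↑u⁻¹ : A) ^ (e + 1) * x ^ e = (↑u⁻¹ : A) := by
        rw [pow_succ, mul_assoc, mul_comm ((↑u⁻¹ : A)) (x ^ e), ← mul_assoc, ← mul_pow, huu,
          one_pow, one_mul]
      simp only [zero_add, pow_zero, mul_one, pow_one]
      rw [hρ, ← hv1]
      linear_combination -(a₀ * hxe) + a₀ * hxe' - (a₀ * (↑u⁻¹ : A)) * (v.inv_mul)
    rw [key, hE, mul_zero]
  refine ⟨ρ, ⟨hρm, hρ0⟩, ?_⟩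
  rintro y ⟨hym, hy0⟩
  exact aux_root_unique f h1 hym hρm hy0 hρ0
end

section
/- Let (A, m) be a local ring and (f₁, …, fₙ) polynomials in A[X₁,…,Xₙ] whose Jacobian matrix at a point a ∈ Aⁿ is invertible modulo m. If α, γ ∈ Aⁿ are zeroes of the system with all coordinates of α - a and γ - a in m, then α = γ. (Uniqueness of the Hensel zero of a Newton polynomial system.) -/
open MvPolynomial IsLocalRing

private lemma eval_sub_eval_mem {A : Type*} [CommRing A] {n : ℕ} {I : Ideal A}
    {x y : Fin n → A} (h : ∀ i, x i - y i ∈ I) (p : MvPolynomial (Fin n) A) :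
    MvPolynomial.eval x p - MvPolynomial.eval y p ∈ I := by
  rw [← Ideal.Quotient.mk_eq_mk_iff_sub_mem]
  have hx : (Ideal.Quotient.mk I) (MvPolynomial.eval x p)
      = eval₂ (Ideal.Quotient.mk I) (fun i => Ideal.Quotient.mk I (x i)) p := by
    simpa [Function.comp_def] using
      MvPolynomial.eval₂_comp_left (Ideal.Quotient.mk I) (RingHom.id A) x p
  have hy : (Ideal.Quotient.mk I) (MvPolynomial.eval y p)
      = eval₂ (Ideal.Quotient.mk I) (fun i => Ideal.Quotient.mk I (y i)) p := by
    simpa [Function.comp_def] using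
      MvPolynomial.eval₂_comp_left (Ideal.Quotient.mk I) (RingHom.id A) y p
  rw [hx, hy]
  congr 1
  funext i
  rw [Ideal.Quotient.mk_eq_mk_iff_sub_mem]
  exact h i

private lemma taylor_aux {A : Type*} [CommRing A] {n : ℕ} {I : Ideal A}
    (a x y : Fin n → A) (hx : ∀ i, x i - a i ∈ I) (hy : ∀ i, y i - a i ∈ I)
    (p : MvPolynomial (Fin n) A) :
    ∃ c : Fin n → A,
      MvPolynomial.eval x p - MvPolynomial.eval y p = ∑ j, c j * (x j - y j) ∧
      ∀ j, c j - MvPolynomial.eval a (MvPolynomial.pderiv j p) ∈ I := by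
  induction p using MvPolynomial.induction_on with
  | C r =>
      refine ⟨0, by simp, fun j => by simp⟩
  | add p q hp hq =>
      obtain ⟨cp, hcp1, hcp2⟩ := hp
      obtain ⟨cq, hcq1, hcq2⟩ := hq
      refine ⟨cp + cq, ?_, fun j => ?_⟩
      · simp only [map_add, Pi.add_apply, add_mul, Finset.sum_add_distrib, ← hcp1, ← hcq1]
        ring
      · have := I.add_mem (hcp2 j) (hcq2 j)
        simpa [map_add, sub_sub, add_sub_add_comm] using this
  | mul_X p i hp =>
      obtain ⟨c, hc1, hc2⟩ := hp
      refine ⟨fun j => c j * x i + if j = i then MvPolynomial.eval y p else 0, ?_, fun j => ?_⟩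
      · have : MvPolynomial.eval x (p * X i) - MvPolynomial.eval y (p * X i)
            = (MvPolynomial.eval x p - MvPolynomial.eval y p) * x i
              + MvPolynomial.eval y p * (x i - y i) := by
          simp only [map_mul, MvPolynomial.eval_X]
          ring
        rw [this, hc1, Finset.sum_mul]
        rw [show (∑ j, (c j * x i + if j = i then MvPolynomial.eval y p else 0) * (x j - y j))
            = (∑ j, c j * (x j - y j) * x i)
              + ∑ j, (if j = i then MvPolynomial.eval y p * (x j - y j) else 0) from by
          rw [← Finset.sum_add_distrib]; congr 1; funext j; split <;> ring]
        rw [Finset.sum_ite_eq' Finset.univ i (fun j => MvPolynomial.eval y p * (x j - y j))]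
        simp
      · have hder : MvPolynomial.eval a (MvPolynomial.pderiv j (p * X i))
            = MvPolynomial.eval a (MvPolynomial.pderiv j p) * a i
              + MvPolynomial.eval a p * (if j = i then 1 else 0) := by
          rw [pderiv_mul, pderiv_X]
          simp only [map_add, map_mul, MvPolynomial.eval_X]
          congr 1
          by_cases h : i = j <;> simp [h, Pi.single_apply, eq_comm]
        rw [hder]
        have h1 : c j * x i - MvPolynomial.eval a (MvPolynomial.pderiv j p) * a i
            = c j * (x i - a i) + (c j - MvPolynomial.eval a (MvPolynomial.pderiv j p)) * a i := by
          ring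
        have hmem1 : c j * x i - MvPolynomial.eval a (MvPolynomial.pderiv j p) * a i ∈ I := by
          rw [h1]
          exact I.add_mem (I.mul_mem_left _ (hx i)) (I.mul_mem_right _ (hc2 j))
        have hmem2 : (if j = i then MvPolynomial.eval y p else 0)
            - MvPolynomial.eval a p * (if j = i then 1 else 0) ∈ I := by
          by_cases h : j = i
          · simpa [h] using eval_sub_eval_mem hy p
          · simp [h]
        have := I.add_mem hmem1 hmem2
        convert this using 1
        ring

private lemma isUnit_of_mk_isUnit {A : Type*} [CommRing A] [IsLocalRing A] {x : A}
    (h : IsUnit (Ideal.Quotient.mk (maximalIdeal A) x)) : IsUnit x := by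
  by_contra hx
  have hm : x ∈ maximalIdeal A := hx
  rw [Ideal.Quotient.eq_zero_iff_mem.mpr hm] at h
  exact h.ne_zero rfl

/-- Uniqueness of the Hensel zero of a Newton polynomial system over a local ring:
if the Jacobian matrix at `a` is invertible modulo `m`, then any two zeroes of the system
congruent to `a` modulo `m` coincide. -/
theorem newton_system_zero_unique {A : Type*} [CommRing A] [IsLocalRing A]
    {n : ℕ} (f : Fin n → MvPolynomial (Fin n) A) (a : Fin n → A)
    (hJ : IsUnit (Matrix.det (Matrix.of fun i j : Fin n =>
      Ideal.Quotient.mk (maximalIdeal A) (MvPolynomial.eval a (MvPolynomial.pderiv j (f i))))))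
    (α γ : Fin n → A)
    (hα : ∀ i, MvPolynomial.eval α (f i) = 0)
    (hγ : ∀ i, MvPolynomial.eval γ (f i) = 0)
    (hαa : ∀ i, α i - a i ∈ maximalIdeal A)
    (hγa : ∀ i, γ i - a i ∈ maximalIdeal A) :
    α = γ := by
  -- Taylor coefficients for each fᵢ
  choose c hc1 hc2 using fun i => taylor_aux a α γ hαa hγa (f i)
  set C : Matrix (Fin n) (Fin n) A := Matrix.of c with hC
  -- C.mulVec (α - γ) = 0
  have hmv : C.mulVec (fun j => α j - γ j) = 0 := by
    funext i
    have := hc1 i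
    rw [hα i, hγ i, zero_sub] at this
    simp only [Matrix.mulVec, dotProduct, Pi.zero_apply, hC, Matrix.of_apply]
    -- sum = 0 from `this`
    have : (∑ j, c i j * (α j - γ j)) = 0 := by simpa using this.symm
    simpa using this
  -- det C is a unit
  have hmap : C.map (Ideal.Quotient.mk (maximalIdeal A))
      = Matrix.of fun i j : Fin n =>
        Ideal.Quotient.mk (maximalIdeal A) (MvPolynomial.eval a (MvPolynomial.pderiv j (f i))) := by
    funext i j
    simp only [Matrix.map_apply, Matrix.of_apply, hC]
    rw [Ideal.Quotient.mk_eq_mk_iff_sub_mem]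
    exact hc2 i j
  have hdet : IsUnit C.det := by
    apply isUnit_of_mk_isUnit
    rw [RingHom.map_det, RingHom.mapMatrix_apply, hmap]
    exact hJ
  -- conclude
  have hinv := Matrix.nonsing_inv_mul C hdet
  have : (fun j => α j - γ j) = 0 := by
    calc (fun j => α j - γ j) = Matrix.mulVec 1 (fun j => α j - γ j) := by
          rw [Matrix.one_mulVec]
      _ = (C⁻¹ * C).mulVec (fun j => α j - γ j) := by rw [hinv]
      _ = C⁻¹.mulVec (C.mulVec (fun j => α j - γ j)) := by rw [Matrix.mulVec_mulVec]
      _ = 0 := by rw [hmv]; simp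
  funext j
  have := congrFun this j
  simpa [sub_eq_zero] using this
end

section
/- Let (A, m) be a local ring, (f₁,…,fₙ) a Newton polynomial system at 0 (i.e. all fᵢ(0) ∈ m and the Jacobian determinant Jac(0) is a unit). Let f_{n+1} := (1 + X_{n+1})·Jac(0)⁻¹·Jac(X₁,…,Xₙ) - 1 ∈ A[X₁,…,X_{n+1}]. Then (f₁,…,f_{n+1}) is again a Newton polynomial system at (0,…,0) ∈ A^{n+1}, and its Jacobian determinant is invertible in the quotient ring A[X₁,…,X_{n+1}]/⟨f₁,…,f_{n+1}⟩ (i.e. the new system is étale). -/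
open MvPolynomial IsLocalRing

lemma pderiv_rename_last' {A : Type*} [CommRing A] {n : ℕ}
    (p : MvPolynomial (Fin n) A) :
    MvPolynomial.pderiv (Fin.last n)
      (MvPolynomial.rename (Fin.castSucc : Fin n → Fin (n+1)) p) = 0 := by
  induction p using MvPolynomial.induction_on with
  | C a => simp
  | add p q hp hq => simp [hp, hq]
  | mul_X p i hp => simp [hp, Pi.single_apply, (Fin.castSucc_lt_last i).ne]

set_option maxHeartbeats 1000000 in
set_option synthInstance.maxHeartbeats 200000 in
/-- Making a Newton polynomial system at `0` étale: adding the variable `X_{n+1}` and the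
polynomial `f_{n+1} = (1 + X_{n+1})·Jac(0)⁻¹·Jac(X) - 1` yields a Newton polynomial system
at `0 ∈ A^{n+1}` whose Jacobian determinant is invertible in the quotient algebra. -/
theorem newton_system_etale {A : Type*} [CommRing A] [IsLocalRing A]
    {n : ℕ} (f : Fin n → MvPolynomial (Fin n) A)
    (hf0 : ∀ i, MvPolynomial.eval (0 : Fin n → A) (f i) ∈ maximalIdeal A)
    (JacPoly : MvPolynomial (Fin n) A)
    (hJac : JacPoly = Matrix.det (Matrix.of fun i j : Fin n => MvPolynomial.pderiv j (f i)))
    (hJac0 : IsUnit (MvPolynomial.eval (0 : Fin n → A) JacPoly))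
    (b : A) (hb : MvPolynomial.eval (0 : Fin n → A) JacPoly * b = 1)
    (F : Fin (n + 1) → MvPolynomial (Fin (n + 1)) A)
    (hF : F = fun i => Fin.lastCases
      ((1 + MvPolynomial.X (Fin.last n)) * MvPolynomial.C b *
          MvPolynomial.rename Fin.castSucc JacPoly - 1)
      (fun j => MvPolynomial.rename Fin.castSucc (f j)) i)
    (JacF : MvPolynomial (Fin (n + 1)) A)
    (hJacF : JacF = Matrix.det (Matrix.of fun i j : Fin (n + 1) =>
      MvPolynomial.pderiv j (F i))) :
    (∀ i, MvPolynomial.eval (0 : Fin (n + 1) → A) (F i) ∈ maximalIdeal A) ∧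
    IsUnit (MvPolynomial.eval (0 : Fin (n + 1) → A) JacF) ∧
    IsUnit (Ideal.Quotient.mk (Ideal.span (Set.range F)) JacF) := by
  set renJ : MvPolynomial (Fin (n+1)) A := rename Fin.castSucc JacPoly with hrenJ
  have hFlast : F (Fin.last n) = (1 + X (Fin.last n)) * C b * renJ - 1 := by
    rw [hF]; simp
  have hFcast : ∀ j : Fin n, F (Fin.castSucc j) = rename Fin.castSucc (f j) := by
    intro j; rw [hF]; simp
  -- derivative of the last polynomial with respect to the last variable
  have hdlast : pderiv (Fin.last n) (F (Fin.last n)) = C b * renJ := by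
    rw [hFlast]
    simp only [map_sub, map_one, sub_zero, pderiv_mul, pderiv_one, pderiv_C, map_add,
      pderiv_X_self, pderiv_X, hrenJ, pderiv_rename_last' JacPoly, mul_zero, add_zero,
      zero_mul, zero_add, mul_one, one_mul, Pi.single_eq_same]
  -- the Jacobian matrix in block form
  have hsub : (Matrix.of fun i j : Fin (n+1) => pderiv j (F i)).submatrix
      finSumFinEquiv finSumFinEquiv =
      Matrix.fromBlocks
        ((Matrix.of fun i j : Fin n => pderiv j (f i)).map (rename Fin.castSucc)) 0
        (Matrix.of fun (_ : Fin 1) (j : Fin n) => pderiv (Fin.castSucc j) (F (Fin.last n)))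
        (Matrix.of fun _ _ => C b * renJ) := by
    have hnat : Fin.natAdd n (0 : Fin 1) = Fin.last n := by ext; simp
    apply Matrix.ext
    rintro (i | i) (j | j)
    · simp only [Matrix.submatrix_apply, finSumFinEquiv_apply_left, Matrix.of_apply,
        Matrix.fromBlocks_apply₁₁, Matrix.map_apply]
      show pderiv (Fin.castSucc j) (F (Fin.castSucc i)) = _
      rw [hFcast, pderiv_rename (Fin.castSucc_injective n)]
    · have h0 : j = 0 := Subsingleton.elim _ _
      subst h0
      simp only [Matrix.submatrix_apply, finSumFinEquiv_apply_left,
        finSumFinEquiv_apply_right, Matrix.of_apply, Matrix.fromBlocks_apply₁₂,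
        Matrix.zero_apply, hnat]
      show pderiv (Fin.last n) (F (Fin.castSucc i)) = 0
      rw [hFcast]; exact pderiv_rename_last' (f i)
    · have h0 : i = 0 := Subsingleton.elim _ _
      subst h0
      simp only [Matrix.submatrix_apply, finSumFinEquiv_apply_left,
        finSumFinEquiv_apply_right, Matrix.of_apply, Matrix.fromBlocks_apply₂₁, hnat]
      rfl
    · have h0 : i = 0 := Subsingleton.elim _ _
      have h0' : j = 0 := Subsingleton.elim _ _
      subst h0; subst h0'
      simp only [Matrix.submatrix_apply, finSumFinEquiv_apply_right, Matrix.of_apply,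
        Matrix.fromBlocks_apply₂₂, hnat]
      exact hdlast
  -- the determinant
  have hdet : JacF = renJ * (C b * renJ) := by
    rw [hJacF, ← Matrix.det_submatrix_equiv_self finSumFinEquiv, hsub,
      Matrix.det_fromBlocks_zero₁₂, Matrix.det_fin_one]
    congr 1
    rw [hrenJ, hJac, AlgHom.map_det (rename (Fin.castSucc : Fin n → Fin (n+1)) :
      MvPolynomial (Fin n) A →ₐ[A] MvPolynomial (Fin (n+1)) A)]
    rfl
  have heval_renJ : eval (0 : Fin (n+1) → A) renJ = eval (0 : Fin n → A) JacPoly := by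
    rw [hrenJ, eval_rename]
    congr 1
  refine ⟨?_, ?_, ?_⟩
  · intro i
    induction i using Fin.lastCases with
    | last =>
        have hz : MvPolynomial.eval (0 : Fin (n+1) → A) (F (Fin.last n)) = 0 := by
          rw [hFlast]
          simp only [map_sub, map_mul, map_add, map_one, eval_X, eval_C, heval_renJ,
            Pi.zero_apply, add_zero, one_mul]
          linear_combination hb
        rw [hz]; exact zero_mem _
    | cast j =>
        rw [hFcast, eval_rename]
        have : ((0 : Fin (n+1) → A) ∘ Fin.castSucc) = 0 := rfl
        rw [this]
        exact hf0 j
  · rw [hdet]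
    simp only [map_mul, eval_C, heval_renJ]
    rw [show eval (0 : Fin n → A) JacPoly * (b * eval (0 : Fin n → A) JacPoly) =
      (eval (0 : Fin n → A) JacPoly * b) * eval (0 : Fin n → A) JacPoly by ring, hb, one_mul]
    exact hJac0
  · have h0 : Ideal.Quotient.mk (Ideal.span (Set.range F)) (F (Fin.last n)) = 0 :=
      Ideal.Quotient.eq_zero_iff_mem.mpr (Ideal.subset_span ⟨_, rfl⟩)
    have key : Ideal.Quotient.mk (Ideal.span (Set.range F))
        ((1 + X (Fin.last n)) * C b * renJ) = 1 := by
      rw [hFlast, map_sub, map_one, sub_eq_zero] at h0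
      exact h0
    refine IsUnit.of_mul_eq_one
      (Ideal.Quotient.mk (Ideal.span (Set.range F))
        ((1 + X (Fin.last n)) * ((1 + X (Fin.last n)) * C b))) ?_
    rw [← map_mul, hdet,
      show renJ * (C b * renJ) * ((1 + X (Fin.last n)) * ((1 + X (Fin.last n)) * C b)) =
        ((1 + X (Fin.last n)) * C b * renJ) * ((1 + X (Fin.last n)) * C b * renJ) by ring,
      map_mul, key, one_mul]
end

section
/- Two nontrivial ultrametric absolute values |·|₁ and |·|₂ on a field K define the same valuation ring {x : |x| ≤ 1} if and only if there exists a real number r > 0 with |x|₂ = |x|₁^r for all x ∈ K. -/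
open Real

/-- Two nontrivial ultrametric absolute values on a field define the same valuation ring
iff one is a positive real power of the other. -/
theorem same_valuation_ring_iff_pow {K : Type*} [Field K]
    (v₁ v₂ : AbsoluteValue K ℝ)
    (hna₁ : ∀ x y : K, v₁ (x + y) ≤ max (v₁ x) (v₁ y))
    (hna₂ : ∀ x y : K, v₂ (x + y) ≤ max (v₂ x) (v₂ y))
    (hnt₁ : ∃ x : K, v₁ x ≠ 0 ∧ v₁ x ≠ 1)
    (hnt₂ : ∃ x : K, v₂ x ≠ 0 ∧ v₂ x ≠ 1) :
    (∀ x : K, v₁ x ≤ 1 ↔ v₂ x ≤ 1) ↔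
      ∃ r : ℝ, 0 < r ∧ ∀ x : K, v₂ x = v₁ x ^ r := by
  constructor
  · intro h
    -- strict version of the hypothesis
    have key : ∀ z : K, v₁ z < 1 ↔ v₂ z < 1 := by
      intro z
      rcases eq_or_ne z 0 with rfl | hz
      · simp
      · have h1 : 0 < v₁ z := v₁.pos hz
        have h2 : 0 < v₂ z := v₂.pos hz
        have hinv := h z⁻¹
        rw [map_inv₀, map_inv₀] at hinv
        rw [inv_le_one₀ h1, inv_le_one₀ h2] at hinv
        rw [← not_le, ← not_le]
        exact not_congr hinv
    -- find y with 1 < v₁ y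
    obtain ⟨x₀, hx0, hx1⟩ := hnt₁
    have hx0' : x₀ ≠ 0 := fun hh => hx0 (by simp [hh])
    have hx0p : 0 < v₁ x₀ := v₁.pos hx0'
    obtain ⟨y, hy⟩ : ∃ y : K, 1 < v₁ y := by
      rcases lt_or_gt_of_ne hx1 with hlt | hgt
      · exact ⟨x₀⁻¹, by rw [map_inv₀]; exact (one_lt_inv₀ hx0p).2 hlt⟩
      · exact ⟨x₀, hgt⟩
    have hy0 : y ≠ 0 := fun hh => by simp [hh] at hy; linarith
    have hb : 0 < v₁ y := lt_trans one_pos hy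
    have hd1 : 1 < v₂ y := by
      by_contra hle
      push_neg at hle
      have hd0 : 0 < v₂ y := v₂.pos hy0
      have : v₂ y⁻¹ < 1 → v₁ y⁻¹ < 1 := (key y⁻¹).mpr
      rcases eq_or_lt_of_le hle with heq | hlt
      · have : v₁ y ≤ 1 := (h y).mpr heq.le
        linarith
      · have h1 : v₁ y⁻¹ < 1 := by
          rw [map_inv₀]; exact inv_lt_one_of_one_lt₀ hy
        have h2 : v₂ y⁻¹ < 1 := (key y⁻¹).mp h1
        rw [map_inv₀] at h2
        have : 1 < v₂ y := (inv_lt_one₀ hd0).1 h2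
        linarith
    have hlogb : 0 < Real.log (v₁ y) := Real.log_pos hy
    have hlogd : 0 < Real.log (v₂ y) := Real.log_pos hd1
    -- key comparison with integer powers
    have H : ∀ (m : ℤ) (n : ℤ) (x : K), x ≠ 0 →
        ((n : ℝ) * Real.log (v₁ x) < m * Real.log (v₁ y) ↔
         (n : ℝ) * Real.log (v₂ x) < m * Real.log (v₂ y)) := by
      intro m n x hx
      have ha : 0 < v₁ x := v₁.pos hx
      have hc : 0 < v₂ x := v₂.pos hx
      have hd : 0 < v₂ y := lt_trans one_pos hd1
      have key' := key (x ^ n * y ^ (-m))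
      rw [map_mul, map_zpow₀, map_zpow₀, map_mul, map_zpow₀, map_zpow₀,
        zpow_neg, zpow_neg, ← div_eq_mul_inv, ← div_eq_mul_inv,
        div_lt_one (zpow_pos hb m), div_lt_one (zpow_pos hd m)] at key'
      rw [← Real.log_zpow, ← Real.log_zpow, ← Real.log_zpow, ← Real.log_zpow,
        Real.log_lt_log_iff (zpow_pos ha n) (zpow_pos hb m),
        Real.log_lt_log_iff (zpow_pos hc n) (zpow_pos hd m)]
      exact key'
    -- the logarithmic ratios agree
    have Heq : ∀ x : K, x ≠ 0 →
        Real.log (v₁ x) * Real.log (v₂ y) = Real.log (v₂ x) * Real.log (v₁ y) := by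
      intro x hx
      by_contra hne
      set A := Real.log (v₁ x) / Real.log (v₁ y) with hA
      set C := Real.log (v₂ x) / Real.log (v₂ y) with hC
      have hAC : A ≠ C := by
        intro hh
        apply hne
        rw [hA, hC, div_eq_div_iff hlogb.ne' hlogd.ne'] at hh
        linarith [hh]
      have Hq : ∀ q : ℚ, A < q ↔ C < q := by
        intro q
        have hden : (0:ℝ) < (q.den : ℝ) := by exact_mod_cast q.pos
        have hnum : (q.den : ℝ) * (q : ℝ) = (q.num : ℝ) := by
          rw [Rat.cast_def]; field_simp
        have h1 : A < q ↔ (q.den : ℝ) * Real.log (v₁ x) < (q.num : ℝ) * Real.log (v₁ y) := by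
          rw [hA, div_lt_iff₀ hlogb]
          constructor
          · intro hh; nlinarith
          · intro hh; nlinarith
        have h2 : C < q ↔ (q.den : ℝ) * Real.log (v₂ x) < (q.num : ℝ) * Real.log (v₂ y) := by
          rw [hC, div_lt_iff₀ hlogd]
          constructor
          · intro hh; nlinarith
          · intro hh; nlinarith
        rw [h1, h2]
        exact_mod_cast H q.num (q.den : ℤ) x hx
      rcases lt_or_gt_of_ne hAC with hlt | hgt
      · obtain ⟨q, hq1, hq2⟩ := exists_rat_btwn hlt
        exact absurd ((Hq q).mp hq1) (not_lt.mpr hq2.le)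
      · obtain ⟨q, hq1, hq2⟩ := exists_rat_btwn hgt
        exact absurd hq2 (not_lt.mpr ((Hq q).mpr hq1).le)
    refine ⟨Real.log (v₂ y) / Real.log (v₁ y), div_pos hlogd hlogb, ?_⟩
    intro x
    rcases eq_or_ne x 0 with rfl | hx
    · rw [map_zero, map_zero, Real.zero_rpow (div_pos hlogd hlogb).ne']
    · have ha : 0 < v₁ x := v₁.pos hx
      have hc : 0 < v₂ x := v₂.pos hx
      have := Heq x hx
      rw [Real.rpow_def_of_pos ha]
      have hl : Real.log (v₁ x) * (Real.log (v₂ y) / Real.log (v₁ y)) = Real.log (v₂ x) := by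
        field_simp
        linarith
      rw [hl, Real.exp_log hc]
  · rintro ⟨r, hr, hv⟩ x
    rw [hv x]
    constructor
    · intro hle
      exact Real.rpow_le_one (v₁.nonneg x) hle hr.le
    · intro hle
      by_contra hgt
      push_neg at hgt
      have : 1 < v₁ x ^ r := (Real.one_lt_rpow_iff (by linarith)).mpr (Or.inl ⟨hgt, hr⟩)
      linarith
end

section
/- Let K be a complete field with a nontrivial ultrametric absolute value, V its valuation ring and m its maximal ideal. Let (f₁,…,fₙ) be polynomials in V[X₁,…,Xₙ] and a ∈ Vⁿ with all fᵢ(a) ∈ m and the Jacobian determinant Jac(a) a unit of V (i.e. |Jac(a)| = 1). Then the system has a unique zero ξ ∈ Vⁿ with ξᵢ - aᵢ ∈ m for all i. (Multivariate Hensel Lemma over a complete ultrametric field.) -/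
open MvPolynomial

section MHLaux
variable {K : Type*} [Field K] (v : AbsoluteValue K ℝ)
    (hna : ∀ x y : K, v (x + y) ≤ max (v x) (v y))

include hna

theorem MHL_vsum {ι : Type*} (s : Finset ι) (g : ι → K) {c : ℝ} (hc : 0 ≤ c)
    (h : ∀ i ∈ s, v (g i) ≤ c) : v (∑ i ∈ s, g i) ≤ c := by
  classical
  induction s using Finset.cons_induction with
  | empty => simpa using hc
  | cons i s his ih =>
    rw [Finset.sum_cons]
    exact le_trans (hna _ _) (max_le (h i (Finset.mem_cons_self _ _))
      (ih fun j hj => h j (Finset.mem_cons_of_mem hj)))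

theorem MHL_vsub (x y : K) : v (x - y) ≤ max (v x) (v y) := by
  rw [sub_eq_add_neg]
  simpa [v.map_neg] using hna x (-y)

theorem MHL_vnat : ∀ m : ℕ, v (m : K) ≤ 1 := by
  intro m
  induction m with
  | zero => simp
  | succ m ih =>
    push_cast
    exact le_trans (hna _ _) (by simp [ih])

theorem MHL_iso {x y : K} (h : v (x - y) < v y) : v x = v y := by
  have h1 : v x ≤ v y := by
    have := hna (x - y) y
    rw [sub_add_cancel] at this
    exact le_trans this (max_le h.le le_rfl)
  refine le_antisymm h1 ?_
  by_contra hlt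
  push_neg at hlt
  have h2 : v y ≤ max (v x) (v (x - y)) := by
    have := hna x (-(x - y))
    rw [v.map_neg] at this
    calc v y = v (x + -(x - y)) := by ring_nf
    _ ≤ max (v x) (v (x - y)) := this
  exact absurd (lt_of_le_of_lt h2 (max_lt hlt h)) (lt_irrefl _)

variable {σ : Type*} [DecidableEq σ]

/-- The subring of multivariate polynomials all of whose coefficients lie in the
valuation ring. -/
def MHL_B : Subring (MvPolynomial σ K) where
  carrier := {p | ∀ k, v (coeff k p) ≤ 1}
  zero_mem' := by intro k; simp
  one_mem' := by
    intro k
    rw [MvPolynomial.coeff_one]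
    split <;> simp
  add_mem' := by
    intro p q hp hq k
    rw [MvPolynomial.coeff_add]
    exact le_trans (hna _ _) (max_le (hp k) (hq k))
  neg_mem' := by
    intro p hp k
    rw [MvPolynomial.coeff_neg, v.map_neg]
    exact hp k
  mul_mem' := by
    intro p q hp hq k
    rw [MvPolynomial.coeff_mul]
    refine MHL_vsum v hna _ _ zero_le_one fun x _ => ?_
    rw [map_mul]
    exact mul_le_one₀ (hp _) (v.nonneg _) (hq _)

theorem MHL_mem_B {p : MvPolynomial σ K} :
    p ∈ MHL_B v hna ↔ ∀ k, v (coeff k p) ≤ 1 := Iff.rfl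

theorem MHL_pderiv_mem {p : MvPolynomial σ K} (hp : p ∈ MHL_B v hna) (j : σ) :
    pderiv j p ∈ MHL_B (σ := σ) v hna := by
  intro k
  conv_lhs => rw [← MvPolynomial.support_sum_monomial_coeff p]
  rw [map_sum, MvPolynomial.coeff_sum]
  refine MHL_vsum v hna _ _ zero_le_one fun d _ => ?_
  rw [MvPolynomial.pderiv_monomial, MvPolynomial.coeff_monomial]
  split
  · rw [map_mul]
    exact mul_le_one₀ (hp d) (v.nonneg _) (MHL_vnat v hna _)
  · simp

theorem MHL_det_mem {n : ℕ} (M : Matrix (Fin n) (Fin n) (MvPolynomial σ K))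
    (h : ∀ i j, M i j ∈ MHL_B v hna) : M.det ∈ MHL_B (σ := σ) v hna := by
  rw [Matrix.det_apply]
  refine Subring.sum_mem _ fun τ _ => ?_
  refine Subring.zsmul_mem _ ?_ _
  exact Subring.prod_mem _ fun i _ => h _ _

theorem MHL_eval_le {n : ℕ} {p : MvPolynomial (Fin n) K} (hp : p ∈ MHL_B v hna)
    {x : Fin n → K} (hx : ∀ i, v (x i) ≤ 1) : v (eval x p) ≤ 1 := by
  rw [MvPolynomial.eval_eq]
  refine MHL_vsum v hna _ _ zero_le_one fun d _ => ?_
  rw [map_mul]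
  refine mul_le_one₀ (hp d) (v.nonneg _) ?_
  rw [map_prod]
  refine Finset.prod_le_one (fun i _ => v.nonneg _) fun i _ => ?_
  rw [map_pow]
  exact pow_le_one₀ (v.nonneg _) (hx i)

end MHLaux

section MHLphi
variable {K : Type*} [Field K] {n : ℕ}

/-- Substitution `Xᵢ ↦ xᵢ + hᵢ·T` into a multivariate polynomial, producing a univariate
polynomial in `T`. -/
noncomputable def MHL_phi (x h : Fin n → K) : MvPolynomial (Fin n) K →+* Polynomial K :=
  MvPolynomial.eval₂Hom Polynomial.C
    (fun i => Polynomial.C (x i) + Polynomial.C (h i) * Polynomial.X)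

theorem MHL_phi_eval (x h : Fin n → K) (p : MvPolynomial (Fin n) K) (t : K) :
    Polynomial.eval t (MHL_phi x h p) = eval (fun i => x i + h i * t) p := by
  have hcomp : (Polynomial.evalRingHom t).comp (Polynomial.C (R := K)) = RingHom.id K :=
    RingHom.ext fun r => Polynomial.eval_C
  show Polynomial.evalRingHom t (MHL_phi x h p) = _
  rw [MHL_phi, MvPolynomial.coe_eval₂Hom, MvPolynomial.eval₂_comp_left, hcomp]
  rw [show ((⇑(Polynomial.evalRingHom t)) ∘
      (fun i => Polynomial.C (x i) + Polynomial.C (h i) * Polynomial.X))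
      = fun i => x i + h i * t from funext fun i => by simp, MvPolynomial.eval₂_id]

theorem MHL_phi_coeff_zero (x h : Fin n → K) (p : MvPolynomial (Fin n) K) :
    (MHL_phi x h p).coeff 0 = eval x p := by
  rw [Polynomial.coeff_zero_eq_eval_zero, MHL_phi_eval]
  simp

variable (v : AbsoluteValue K ℝ)
    (hna : ∀ x y : K, v (x + y) ≤ max (v x) (v y))

include hna

/-- The subring of univariate polynomials with `d`-th coefficient of absolute value
at most `c ^ d`. -/
def MHL_S (c : ℝ) (hc : 0 ≤ c) : Subring (Polynomial K) where
  carrier := {q | ∀ d, v (q.coeff d) ≤ c ^ d}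
  zero_mem' := by intro d; simpa using pow_nonneg hc d
  one_mem' := by
    intro d
    rw [Polynomial.coeff_one]
    split
    · subst ‹d = 0›; simp
    · simpa using pow_nonneg hc d
  add_mem' := by
    intro p q hp hq d
    rw [Polynomial.coeff_add]
    exact le_trans (hna _ _) (max_le (hp d) (hq d))
  neg_mem' := by
    intro p hp d
    rw [Polynomial.coeff_neg, v.map_neg]
    exact hp d
  mul_mem' := by
    intro p q hp hq d
    rw [Polynomial.coeff_mul]
    refine MHL_vsum v hna _ _ (pow_nonneg hc d) fun ij hij => ?_
    rw [Finset.HasAntidiagonal.mem_antidiagonal] at hij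
    rw [map_mul, ← hij, pow_add]
    exact mul_le_mul (hp _) (hq _) (v.nonneg _) (pow_nonneg hc _)

theorem MHL_phi_mem {p : MvPolynomial (Fin n) K} (hp : p ∈ MHL_B v hna)
    {x h : Fin n → K} (hx : ∀ i, v (x i) ≤ 1) {c : ℝ} (hc0 : 0 ≤ c) (hc1 : c ≤ 1)
    (hh : ∀ i, v (h i) ≤ c) : MHL_phi x h p ∈ MHL_S v hna c hc0 := by
  have hgen : ∀ i : Fin n,
      Polynomial.C (x i) + Polynomial.C (h i) * Polynomial.X ∈ MHL_S v hna c hc0 := by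
    intro i d
    match d with
    | 0 => simpa [Polynomial.coeff_C] using hx i
    | 1 => simpa [Polynomial.coeff_C] using hh i
    | (d+2) => simp [Polynomial.coeff_C, pow_nonneg hc0]
  have hrep : MHL_phi x h p = ∑ k ∈ p.support, MHL_phi x h (monomial k (coeff k p)) := by
    rw [← map_sum, MvPolynomial.support_sum_monomial_coeff]
  rw [hrep]
  refine Subring.sum_mem _ fun k _ => ?_
  rw [MHL_phi, MvPolynomial.coe_eval₂Hom, MvPolynomial.eval₂_monomial]
  refine Subring.mul_mem _ ?_ ?_
  · intro d
    match d with
    | 0 => simpa [Polynomial.coeff_C] using hp k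
    | (d+1) => simp [Polynomial.coeff_C, pow_nonneg hc0]
  · exact Subring.prod_mem _ fun i _ => Subring.pow_mem _ (hgen i) _

end MHLphi

section MHLmore
variable {K : Type*} [Field K] {n : ℕ}

theorem MHL_phi_coeff_one (x h : Fin n → K) (p : MvPolynomial (Fin n) K) :
    (MHL_phi x h p).coeff 1 = ∑ j, eval x (pderiv j p) * h j := by
  induction p using MvPolynomial.induction_on with
  | C a => simp [MHL_phi, Polynomial.coeff_C]
  | add p q hp hq =>
      simp only [map_add, Polynomial.coeff_add, hp, hq, add_mul, Finset.sum_add_distrib]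
  | mul_X p i hp =>
    have key : MHL_phi x h (p * X i)
        = MHL_phi x h p * (Polynomial.C (x i) + Polynomial.C (h i) * Polynomial.X) := by
      rw [map_mul]; congr 1; simp [MHL_phi]
    rw [key, mul_add, ← mul_assoc, Polynomial.coeff_add, Polynomial.coeff_mul_C,
      show (1 : ℕ) = 0 + 1 from rfl, Polynomial.coeff_mul_X, Polynomial.coeff_mul_C,
      MHL_phi_coeff_zero, hp]
    simp only [pderiv_mul, map_add, map_mul, pderiv_X, eval_X, add_mul, Finset.sum_add_distrib,
      Finset.sum_mul]
    congr 1
    · exact Finset.sum_congr rfl fun j _ => by ring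
    · simp [Pi.single_apply, apply_ite (eval x), Finset.sum_ite_eq]

variable (v : AbsoluteValue K ℝ)
    (hna : ∀ x y : K, v (x + y) ≤ max (v x) (v y))
include hna

theorem MHL_taylor {p : MvPolynomial (Fin n) K} (hp : p ∈ MHL_B v hna)
    {x : Fin n → K} (hx : ∀ i, v (x i) ≤ 1) {c : ℝ} (hc0 : 0 ≤ c) (hc1 : c ≤ 1)
    {h : Fin n → K} (hh : ∀ i, v (h i) ≤ c) :
    v (eval (fun i => x i + h i) p - eval x p - ∑ j, eval x (pderiv j p) * h j) ≤ c ^ 2 := by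
  set P := MHL_phi x h p with hP
  have hmem := MHL_phi_mem v hna hp hx hc0 hc1 hh
  have h1 : eval (fun i => x i + h i) p = Polynomial.eval 1 P := by
    rw [hP, MHL_phi_eval]; simp
  set N := P.natDegree + 2 with hN
  have hev : Polynomial.eval 1 P = ∑ d ∈ Finset.range N, P.coeff d := by
    rw [Polynomial.eval_eq_sum_range' (n := N) (by omega) 1]
    simp
  have hsplit : ∑ d ∈ Finset.range N, P.coeff d
      = P.coeff 0 + P.coeff 1 + ∑ d ∈ Finset.Ico 2 N, P.coeff d := by
    rw [Finset.range_eq_Ico, ← Finset.sum_Ico_consecutive _ (by omega : 0 ≤ 2) (by omega : 2 ≤ N)]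
    congr 1
    show ∑ d ∈ Finset.Ico 0 2, P.coeff d = _
    rw [← Finset.range_eq_Ico]
    simp [Finset.sum_range_succ]
  have herr : eval (fun i => x i + h i) p - eval x p - ∑ j, eval x (pderiv j p) * h j
      = ∑ d ∈ Finset.Ico 2 N, P.coeff d := by
    have h0 : eval x p = P.coeff 0 := (MHL_phi_coeff_zero x h p).symm
    have h1' : ∑ j, eval x (pderiv j p) * h j = P.coeff 1 := (MHL_phi_coeff_one x h p).symm
    rw [h1, hev, hsplit, ← h0, ← h1']
    ring
  rw [herr]
  refine MHL_vsum v hna _ _ (by positivity) fun d hd => ?_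
  exact le_trans (hmem d) (pow_le_pow_of_le_one hc0 hc1 (Finset.mem_Ico.mp hd).1)

theorem MHL_lip {p : MvPolynomial (Fin n) K} (hp : p ∈ MHL_B v hna) {x y : Fin n → K}
    (hx : ∀ i, v (x i) ≤ 1) {c : ℝ} (hc0 : 0 ≤ c) (hc1 : c ≤ 1)
    (hxy : ∀ i, v (y i - x i) ≤ c) : v (eval y p - eval x p) ≤ c := by
  have hT := MHL_taylor v hna hp hx hc0 hc1 (h := fun i => y i - x i) hxy
  have hfun : (fun i => x i + (y i - x i)) = y := funext fun i => by ring
  rw [hfun] at hT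
  have hS : v (∑ j, eval x (pderiv j p) * (y j - x j)) ≤ c := by
    refine MHL_vsum v hna _ _ hc0 fun j _ => ?_
    rw [map_mul]
    have h1 : v (eval x (pderiv j p)) * v (y j - x j) ≤ 1 * c :=
      mul_le_mul (MHL_eval_le v hna (MHL_pderiv_mem v hna hp j) hx) (hxy j)
        (v.nonneg _) zero_le_one
    simpa using h1
  have hre : eval y p - eval x p
      = (eval y p - eval x p - ∑ j, eval x (pderiv j p) * (y j - x j))
        + ∑ j, eval x (pderiv j p) * (y j - x j) := by ring
  rw [hre]
  refine le_trans (hna _ _) (max_le (le_trans hT ?_) hS)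
  calc c ^ 2 = c * c := sq c
  _ ≤ 1 * c := mul_le_mul_of_nonneg_right hc1 hc0
  _ = c := one_mul c

theorem MHL_det_le {M : Matrix (Fin n) (Fin n) K} (h : ∀ i j, v (M i j) ≤ 1) :
    v M.det ≤ 1 := by
  rw [Matrix.det_apply]
  refine MHL_vsum v hna _ _ zero_le_one fun τ _ => ?_
  have hs : v (Equiv.Perm.sign τ • ∏ i, M (τ i) i) = v (∏ i, M (τ i) i) := by
    rcases Int.units_eq_one_or (Equiv.Perm.sign τ) with hs | hs <;>
      rw [hs] <;> simp [Units.smul_def, v.map_neg]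
  rw [hs, map_prod]
  exact Finset.prod_le_one (fun i _ => v.nonneg _) fun i _ => h _ _

theorem MHL_adj_le {M : Matrix (Fin n) (Fin n) K} (h : ∀ i j, v (M i j) ≤ 1) (i j : Fin n) :
    v (M.adjugate i j) ≤ 1 := by
  rw [Matrix.adjugate_apply]
  refine MHL_det_le v hna fun i' j' => ?_
  rw [Matrix.updateRow_apply]
  split
  · rw [Pi.single_apply]
    split <;> simp
  · exact h _ _

end MHLmore

theorem MHL_le_max (b q : ℝ) (hb : 0 ≤ b) (h : ∀ ε : ℝ, 0 < ε → q ≤ max b ε) : q ≤ b := by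
  by_contra hq
  push_neg at hq
  have hε : 0 < (b + q) / 2 := by linarith
  have h2 := h _ hε
  rw [max_eq_right (by linarith)] at h2
  linarith

/-- Multivariate Hensel Lemma over a complete ultrametric field: a Newton polynomial system
with coefficients in the valuation ring and an approximate simple zero `a` has a unique zero
`ξ` with `ξᵢ - aᵢ ∈ m` for all `i`. -/
theorem multivariate_hensel_complete {K : Type*} [Field K]
    (v : AbsoluteValue K ℝ)
    (hna : ∀ x y : K, v (x + y) ≤ max (v x) (v y))
    (hnt : ∃ x : K, v x ≠ 0 ∧ v x ≠ 1)
    (hcomplete : ∀ s : ℕ → K,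
      (∀ ε : ℝ, 0 < ε → ∃ N, ∀ m ≥ N, ∀ n ≥ N, v (s m - s n) < ε) →
      ∃ l : K, ∀ ε : ℝ, 0 < ε → ∃ N, ∀ n ≥ N, v (s n - l) < ε)
    {n : ℕ} (f : Fin n → MvPolynomial (Fin n) K)
    (hfV : ∀ i k, v (MvPolynomial.coeff k (f i)) ≤ 1)
    (a : Fin n → K) (haV : ∀ i, v (a i) ≤ 1)
    (hfa : ∀ i, v (MvPolynomial.eval a (f i)) < 1)
    (hJac : v (MvPolynomial.eval a (Matrix.det
      (Matrix.of fun i j : Fin n => MvPolynomial.pderiv j (f i)))) = 1) :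
    ∃! ξ : Fin n → K, (∀ i, v (ξ i) ≤ 1) ∧ (∀ i, MvPolynomial.eval ξ (f i) = 0) ∧
      ∀ i, v (ξ i - a i) < 1 := by
  classical
  rcases Nat.eq_zero_or_pos n with hn0 | hn
  · have hempty : IsEmpty (Fin n) := by rw [hn0]; infer_instance
    exact ⟨a, ⟨haV, fun i => hempty.elim i, fun i => hempty.elim i⟩,
      fun y _ => funext fun i => hempty.elim i⟩
  -- a constant 0 < ρ < 1
  obtain ⟨z, hz0, hz1⟩ := hnt
  have hzpos : 0 < v z := lt_of_le_of_ne (v.nonneg z) (Ne.symm hz0)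
  obtain ⟨ρ, hρ0, hρ1⟩ : ∃ ρ : ℝ, 0 < ρ ∧ ρ < 1 := by
    rcases lt_or_gt_of_ne hz1 with h | h
    · exact ⟨v z, hzpos, h⟩
    · exact ⟨(v z)⁻¹, by positivity, inv_lt_one_of_one_lt₀ h⟩
  haveI : Nonempty (Fin n) := Fin.pos_iff_nonempty.mp hn
  have hne : (Finset.univ : Finset (Fin n)).Nonempty := Finset.univ_nonempty
  set i0 : Fin n := ⟨0, hn⟩ with hi0
  set t : ℝ := Finset.univ.sup' hne (fun i => max ρ (v (eval a (f i)))) with ht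
  have ht0 : 0 < t := by
    have h1 : max ρ (v (eval a (f i0)))
        ≤ Finset.univ.sup' hne (fun i => max ρ (v (eval a (f i)))) := by
      exact Finset.le_sup' (f := fun i => max ρ (v (eval a (f i)))) (Finset.mem_univ i0)
    rw [← ht] at h1
    have h2 : ρ ≤ max ρ (v (eval a (f i0))) := le_max_left _ _
    linarith
  have ht1 : t < 1 := by
    rw [ht, Finset.sup'_lt_iff]
    exact fun i _ => max_lt hρ1 (hfa i)
  have htle1 : t ≤ 1 := ht1.le
  have hfat : ∀ i, v (eval a (f i)) ≤ t := by
    intro i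
    have h1 : max ρ (v (eval a (f i)))
        ≤ Finset.univ.sup' hne (fun i => max ρ (v (eval a (f i)))) := by
      exact Finset.le_sup' (f := fun i => max ρ (v (eval a (f i)))) (Finset.mem_univ i)
    rw [← ht] at h1
    exact le_trans (le_max_right _ _) h1
  -- the Jacobian
  have hfB : ∀ i, f i ∈ MHL_B v hna := hfV
  set D : MvPolynomial (Fin n) K := (Matrix.of fun i j : Fin n => pderiv j (f i)).det with hD
  have hDB : D ∈ MHL_B v hna := MHL_det_mem v hna _ fun i j => MHL_pderiv_mem v hna (hfB i) j
  set J : (Fin n → K) → Matrix (Fin n) (Fin n) K :=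
    fun x => Matrix.of fun i j => eval x (pderiv j (f i)) with hJ
  have hevalD : ∀ x : Fin n → K, eval x D = (J x).det := by
    intro x
    rw [hD, RingHom.map_det]
    rfl
  have hJentry : ∀ x : Fin n → K, (∀ i, v (x i) ≤ 1) → ∀ i j, v (J x i j) ≤ 1 := fun x hx i j =>
    MHL_eval_le v hna (MHL_pderiv_mem v hna (hfB i) j) hx
  have hdet : ∀ x : Fin n → K, (∀ i, v (x i) ≤ 1) → (∀ i, v (x i - a i) ≤ t) →
      v ((J x).det) = 1 := by
    intro x hx hxa
    rw [← hevalD, ← hJac]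
    refine MHL_iso v hna ?_
    calc v (eval x D - eval a D) ≤ t := MHL_lip v hna hDB haV ht0.le htle1 hxa
    _ < 1 := ht1
    _ = v (eval a D) := hJac.symm
  -- the Newton step
  set u : (Fin n → K) → (Fin n → K) :=
    fun x => ((J x).det)⁻¹ • ((J x).adjugate.mulVec (fun i => eval x (f i))) with hu
  have hstep : ∀ x : Fin n → K, (∀ i, v (x i) ≤ 1) → (∀ i, v (x i - a i) ≤ t) →
      ∀ c : ℝ, 0 < c → c ≤ t → (∀ i, v (eval x (f i)) ≤ c) →
      (∀ i, v (u x i) ≤ c) ∧ (∀ i, v (eval (x - u x) (f i)) ≤ c ^ 2) := by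
    intro x hx hxa c hc0 hct hfc
    have hct1 : c ≤ 1 := le_trans hct htle1
    have hd1 : v ((J x).det) = 1 := hdet x hx hxa
    have hdne : (J x).det ≠ 0 := by
      intro h0
      rw [h0] at hd1
      simp at hd1
    have hub : ∀ i, v (u x i) ≤ c := by
      intro i
      have hvv : v ((J x).det * u x i) = v (u x i) := by rw [map_mul, hd1, one_mul]
      have key : (J x).det * u x i = (J x).adjugate.mulVec (fun i => eval x (f i)) i := by
        rw [hu]
        simp only [Pi.smul_apply, smul_eq_mul]
        rw [← mul_assoc, mul_inv_cancel₀ hdne, one_mul]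
      rw [← hvv, key]
      show v (∑ j, (J x).adjugate i j * eval x (f j)) ≤ c
      refine MHL_vsum v hna _ _ hc0.le fun j _ => ?_
      rw [map_mul]
      have := mul_le_mul (MHL_adj_le v hna (hJentry x hx) i j) (hfc j) (v.nonneg _) zero_le_one
      simpa using this
    refine ⟨hub, ?_⟩
    have hJu : (J x).mulVec (u x) = fun i => eval x (f i) := by
      rw [hu, Matrix.mulVec_smul, Matrix.mulVec_mulVec, Matrix.mul_adjugate,
        Matrix.smul_mulVec, Matrix.one_mulVec, smul_smul, inv_mul_cancel₀ hdne, one_smul]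
    intro i
    have hT := MHL_taylor v hna (hfB i) hx hc0.le hct1 (h := fun j => -(u x j))
      (fun j => by rw [v.map_neg]; exact hub j)
    have hfun : (fun j => x j + -(u x j)) = x - u x := funext fun j => by
      simp [sub_eq_add_neg]
    rw [hfun] at hT
    have hsum : ∑ j, eval x (pderiv j (f i)) * -(u x j) = -eval x (f i) := by
      have h1 : ∑ j, (J x) i j * u x j = eval x (f i) := congrFun hJu i
      calc ∑ j, eval x (pderiv j (f i)) * -(u x j) = -∑ j, (J x) i j * u x j := by
            rw [← Finset.sum_neg_distrib]
            exact Finset.sum_congr rfl fun j _ => by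
              show eval x (pderiv j (f i)) * -(u x j) = -(eval x (pderiv j (f i)) * u x j)
              ring
      _ = -eval x (f i) := by rw [h1]
    rw [hsum, sub_neg_eq_add, sub_add_cancel] at hT
    exact hT
  -- the Newton iteration
  set seq : ℕ → (Fin n → K) := fun m => Nat.rec a (fun _ y => y - u y) m with hseq
  have hseq0 : seq 0 = a := rfl
  have hseqS : ∀ m, seq (m + 1) = seq m - u (seq m) := fun m => rfl
  have hpow_le_t : ∀ m : ℕ, t ^ 2 ^ m ≤ t := by
    intro m
    calc t ^ 2 ^ m ≤ t ^ 1 := pow_le_pow_of_le_one ht0.le htle1 Nat.one_le_two_pow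
    _ = t := pow_one t
  have hinv : ∀ m, (∀ i, v (seq m i) ≤ 1) ∧ (∀ i, v (seq m i - a i) ≤ t)
      ∧ (∀ i, v (eval (seq m) (f i)) ≤ t ^ 2 ^ m) := by
    intro m
    induction m with
    | zero =>
      refine ⟨haV, fun i => by simp [hseq0]; positivity, ?_⟩
      simpa [hseq0, pow_one] using hfat
    | succ m ih =>
      obtain ⟨ih1, ih2, ih3⟩ := ih
      obtain ⟨hu1, hu2⟩ := hstep (seq m) ih1 ih2 _ (pow_pos ht0 _) (hpow_le_t m) ih3
      have e2 : (t ^ 2 ^ m) ^ 2 = t ^ 2 ^ (m + 1) := by rw [← pow_mul, pow_succ]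
      refine ⟨?_, ?_, ?_⟩
      · intro i
        rw [hseqS]
        exact le_trans (MHL_vsub v hna _ _)
          (max_le (ih1 i) (le_trans (hu1 i) (le_trans (hpow_le_t m) htle1)))
      · intro i
        rw [hseqS]
        have hre : (seq m - u (seq m)) i - a i = (seq m i - a i) - u (seq m) i := by
          simp only [Pi.sub_apply]
          ring
        rw [hre]
        exact le_trans (MHL_vsub v hna _ _)
          (max_le (ih2 i) (le_trans (hu1 i) (hpow_le_t m)))
      · intro i
        rw [hseqS, ← e2]
        exact hu2 i
  have hu_m : ∀ m i, v (u (seq m) i) ≤ t ^ 2 ^ m := fun m =>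
    (hstep (seq m) (hinv m).1 (hinv m).2.1 _ (pow_pos ht0 _) (hpow_le_t m) (hinv m).2.2).1
  have hdiff : ∀ m r i, v (seq (m + r) i - seq m i) ≤ t ^ 2 ^ m := by
    intro m r
    induction r with
    | zero => intro i; simpa using (pow_pos ht0 _).le
    | succ r ih =>
      intro i
      have hre : seq (m + (r + 1)) i - seq m i
          = -(u (seq (m + r)) i) + (seq (m + r) i - seq m i) := by
        have : seq (m + (r + 1)) = seq (m + r) - u (seq (m + r)) := hseqS (m + r)
        rw [this]
        simp only [Pi.sub_apply]
        ring
      rw [hre]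
      refine le_trans (hna _ _) (max_le ?_ (ih i))
      rw [v.map_neg]
      refine le_trans (hu_m (m + r) i) ?_
      exact pow_le_pow_of_le_one ht0.le htle1 (Nat.pow_le_pow_right (by norm_num) (by omega))
  have hcauchy : ∀ i, ∀ ε : ℝ, 0 < ε → ∃ N, ∀ p ≥ N, ∀ q ≥ N, v (seq p i - seq q i) < ε := by
    intro i ε hε
    obtain ⟨N, hN⟩ := exists_pow_lt_of_lt_one hε ht1
    refine ⟨N, fun p hp q hq => ?_⟩
    have key : ∀ p q : ℕ, q ≤ p → N ≤ q → v (seq p i - seq q i) < ε := by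
      intro p q hqp hNq
      have h1 : v (seq p i - seq q i) ≤ t ^ 2 ^ q := by
        have := hdiff q (p - q) i
        rwa [Nat.add_sub_cancel' hqp] at this
      refine lt_of_le_of_lt (le_trans h1 ?_) hN
      calc t ^ 2 ^ q ≤ t ^ q := pow_le_pow_of_le_one ht0.le htle1 (Nat.lt_two_pow_self (n := q)).le
      _ ≤ t ^ N := pow_le_pow_of_le_one ht0.le htle1 hNq
    rcases le_total q p with h | h
    · exact key p q h hq
    · rw [v.map_sub]
      exact key q p h hp
  choose ξ hξ using fun i => hcomplete (fun m => seq m i) (hcauchy i)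
  have hlim : ∀ m i, v (ξ i - seq m i) ≤ t ^ 2 ^ m := by
    intro m i
    refine MHL_le_max _ _ (pow_pos ht0 _).le fun ε hε => ?_
    obtain ⟨N, hN⟩ := hξ i ε hε
    set p := max m N with hp
    have h1 : v (seq p i - ξ i) < ε := hN p (le_max_right _ _)
    have h2 : v (seq p i - seq m i) ≤ t ^ 2 ^ m := by
      have := hdiff m (p - m) i
      rwa [Nat.add_sub_cancel' (le_max_left _ _)] at this
    have hre : ξ i - seq m i = -(seq p i - ξ i) + (seq p i - seq m i) := by ring
    rw [hre]
    refine le_trans (hna _ _) (max_le ?_ ?_)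
    · rw [v.map_neg]
      exact le_trans h1.le (le_max_right _ _)
    · exact le_trans h2 (le_max_left _ _)
  have hlim0 : ∀ i, v (ξ i - a i) ≤ t := by
    intro i
    have := hlim 0 i
    rw [hseq0] at this
    simpa [pow_one] using this
  have hξV : ∀ i, v (ξ i) ≤ 1 := by
    intro i
    have hre : ξ i = (ξ i - a i) + a i := by ring
    rw [hre]
    exact le_trans (hna _ _) (max_le (le_trans (hlim0 i) htle1) (haV i))
  have hξa : ∀ i, v (ξ i - a i) < 1 := fun i => lt_of_le_of_lt (hlim0 i) ht1
  have hξzero : ∀ i, eval ξ (f i) = 0 := by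
    intro i
    have hle : ∀ m : ℕ, v (eval ξ (f i)) ≤ t ^ m := by
      intro m
      have h1 : v (eval ξ (f i) - eval (seq m) (f i)) ≤ t ^ 2 ^ m :=
        MHL_lip v hna (hfB i) (hinv m).1 (pow_pos ht0 _).le
          (le_trans (hpow_le_t m) htle1) (fun j => hlim m j)
      have h2 := (hinv m).2.2 i
      have hre : eval ξ (f i) = (eval ξ (f i) - eval (seq m) (f i)) + eval (seq m) (f i) := by
        ring
      calc v (eval ξ (f i))
          = v ((eval ξ (f i) - eval (seq m) (f i)) + eval (seq m) (f i)) := by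
            rw [sub_add_cancel]
      _ ≤ max (v (eval ξ (f i) - eval (seq m) (f i))) (v (eval (seq m) (f i))) := hna _ _
      _ ≤ t ^ 2 ^ m := max_le h1 h2
      _ ≤ t ^ m := pow_le_pow_of_le_one ht0.le htle1 (Nat.lt_two_pow_self (n := m)).le
    have hv0 : v (eval ξ (f i)) = 0 := by
      by_contra h0
      have hpos : 0 < v (eval ξ (f i)) := lt_of_le_of_ne (v.nonneg _) (Ne.symm h0)
      obtain ⟨m, hm⟩ := exists_pow_lt_of_lt_one hpos ht1
      exact absurd (hle m) (not_le.mpr hm)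
    exact v.eq_zero.mp hv0
  refine ⟨ξ, ⟨hξV, hξzero, hξa⟩, ?_⟩
  -- uniqueness
  intro y hy
  obtain ⟨hyV, hyzero, hya⟩ := hy
  set c : ℝ := Finset.univ.sup' hne (fun i => v (y i - ξ i)) with hc
  have hcle : ∀ i, v (y i - ξ i) ≤ c := by
    intro i
    have h1 : v (y i - ξ i) ≤ Finset.univ.sup' hne (fun i => v (y i - ξ i)) :=
      Finset.le_sup' (f := fun i => v (y i - ξ i)) (Finset.mem_univ i)
    rw [← hc] at h1
    exact h1
  have hc0 : 0 ≤ c := le_trans (v.nonneg _) (hcle i0)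
  have hc1 : c < 1 := by
    rw [hc, Finset.sup'_lt_iff]
    intro i _
    have hre : y i - ξ i = (y i - a i) - (ξ i - a i) := by ring
    rw [hre]
    exact lt_of_le_of_lt (MHL_vsub v hna _ _) (max_lt (hya i) (hξa i))
  have hEb : ∀ i, v (eval (fun j => ξ j + (y j - ξ j)) (f i) - eval ξ (f i)
      - ∑ j, eval ξ (pderiv j (f i)) * (y j - ξ j)) ≤ c ^ 2 := fun i =>
    MHL_taylor v hna (hfB i) hξV hc0 hc1.le hcle
  have hmv : ∀ i, ∑ j, (J ξ) i j * (y j - ξ j)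
      = -(eval (fun j => ξ j + (y j - ξ j)) (f i) - eval ξ (f i)
        - ∑ j, eval ξ (pderiv j (f i)) * (y j - ξ j)) := by
    intro i
    have h0 : (fun j => ξ j + (y j - ξ j)) = y := funext fun j => by ring
    rw [h0, hyzero i, hξzero i]
    show ∑ j, eval ξ (pderiv j (f i)) * (y j - ξ j) = _
    ring
  have hdet1 : v ((J ξ).det) = 1 := hdet ξ hξV hlim0
  have key : ∀ i, v (y i - ξ i) ≤ c ^ 2 := by
    intro i
    have h2 : (J ξ).det • (fun j => y j - ξ j)
        = (J ξ).adjugate.mulVec ((J ξ).mulVec (fun j => y j - ξ j)) := by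
      rw [Matrix.mulVec_mulVec, Matrix.adjugate_mul, Matrix.smul_mulVec,
        Matrix.one_mulVec]
    have h3 : v ((J ξ).det * (y i - ξ i)) = v (y i - ξ i) := by
      rw [map_mul, hdet1, one_mul]
    rw [← h3]
    have h4 : (J ξ).det * (y i - ξ i)
        = (J ξ).adjugate.mulVec ((J ξ).mulVec (fun j => y j - ξ j)) i := by
      rw [← h2]
      simp
    rw [h4]
    show v (∑ j, (J ξ).adjugate i j * ((J ξ).mulVec (fun j => y j - ξ j) j)) ≤ c ^ 2
    refine MHL_vsum v hna _ _ (by positivity) fun j _ => ?_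
    rw [map_mul]
    have h5 : v ((J ξ).mulVec (fun j => y j - ξ j) j) ≤ c ^ 2 := by
      show v (∑ k, (J ξ) j k * (y k - ξ k)) ≤ c ^ 2
      rw [hmv j, v.map_neg]
      exact hEb j
    have := mul_le_mul (MHL_adj_le v hna (hJentry ξ hξV) i j) h5 (v.nonneg _) zero_le_one
    simpa using this
  have hcc : c ≤ c ^ 2 := Finset.sup'_le hne _ fun i _ => key i
  have hc00 : c = 0 := by
    by_contra hcne
    have hcpos : 0 < c := lt_of_le_of_ne hc0 (Ne.symm hcne)
    have : c ^ 2 < c := by nlinarith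
    linarith
  funext i
  have h6 : v (y i - ξ i) ≤ 0 := by rw [← hc00]; exact hcle i
  have h7 : v (y i - ξ i) = 0 := le_antisymm h6 (v.nonneg _)
  have := v.eq_zero.mp h7
  exact sub_eq_zero.mp this
end

section
/- Let v : K → ℤ ∪ {∞} be a henselian discrete valuation on a field K with valuation ring V and maximal ideal m. Let F(X) = Σ_{k=0}^n a_k X^k ∈ V[X] with a₁ ≠ 0 and v(a₀) > 2·v(a₁). Then F has a zero ξ ∈ V with v(ξ) ≥ v(a₀) - v(a₁) > v(a₁), and ξ is the unique zero of F with v(ξ) > v(a₁). (Hensel–Newton lemma for valued fields.) -/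
open Polynomial

private lemma coeff_comp_C_mul_X {K : Type*} [CommRing K] (p : K[X]) (a : K) (k : ℕ) :
    (p.comp (C a * X)).coeff k = a ^ k * p.coeff k := by
  induction p using Polynomial.induction_on' with
  | add p q hp hq => simp [add_comp, hp, hq, mul_add]
  | monomial n b =>
      rw [monomial_comp, mul_pow, ← C_pow, ← mul_assoc, ← C_mul, coeff_C_mul, coeff_X_pow,
        coeff_monomial]
      by_cases h : n = k
      · subst h; simp [mul_comm]
      · simp [h, Ne.symm h]

private lemma eval_val_nonneg {K : Type*} [Field K] (v : AddValuation K (WithTop ℤ))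
    (p : K[X]) (hp : ∀ k, 0 ≤ v (p.coeff k)) {x : K} (hx : 0 ≤ v x) :
    0 ≤ v (p.eval x) := by
  rw [eval_eq_sum_range]
  refine v.map_le_sum fun i _ => ?_
  rw [v.map_mul, v.map_pow]
  exact add_nonneg (hp i) (nsmul_nonneg hx i)

/-- Hensel–Newton lemma for a henselian discrete valuation: if `F = Σ a_k X^k` has
coefficients in the valuation ring, `a₁ ≠ 0` and `v(a₀) > 2·v(a₁)`, then `F` has a zero `ξ`
with `v(ξ) ≥ v(a₀) - v(a₁) > v(a₁)`, and `ξ` is the unique zero of `F` with `v(ξ) > v(a₁)`. -/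
theorem hensel_newton_valued {K : Type*} [Field K]
    (v : AddValuation K (WithTop ℤ))
    (hhens : ∀ f : Polynomial K, (∀ k, 0 ≤ v (f.coeff k)) →
      ∀ a : K, 0 ≤ v a → 0 < v (f.eval a) → v (f.derivative.eval a) = 0 →
        ∃! α : K, f.eval α = 0 ∧ 0 < v (α - a))
    (F : Polynomial K) (hFV : ∀ k, 0 ≤ v (F.coeff k))
    (ha1 : F.coeff 1 ≠ 0)
    (h01 : v (F.coeff 1) + v (F.coeff 1) < v (F.coeff 0)) :
    ∃ ξ : K, F.eval ξ = 0 ∧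
      v (F.coeff 0) ≤ v (F.coeff 1) + v ξ ∧
      v (F.coeff 1) < v ξ ∧
      ∀ ξ' : K, F.eval ξ' = 0 → v (F.coeff 1) < v ξ' → ξ' = ξ := by
  set a₁ := F.coeff 1 with ha₁def
  set b := a₁⁻¹ with hbdef
  have hb : b ≠ 0 := inv_ne_zero ha1
  have hbb : b * b ≠ 0 := mul_ne_zero hb hb
  have hvb : v b ≠ ⊤ := v.ne_top_iff.mpr hb
  have hvbb : v (b * b) ≠ ⊤ := v.ne_top_iff.mpr hbb
  have hva1 : v a₁ ≠ ⊤ := v.ne_top_iff.mpr ha1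
  -- the rescaled polynomial
  set f : K[X] := C (b * b) * F.comp (C a₁ * X) with hfdef
  have hcoeff : ∀ k, f.coeff k = b * b * (a₁ ^ k * F.coeff k) := by
    intro k
    rw [hfdef, coeff_C_mul, coeff_comp_C_mul_X]
  have hcoeff0 : f.coeff 0 = b * b * F.coeff 0 := by
    rw [hcoeff]; ring
  have hcoeff1 : f.coeff 1 = 1 := by
    rw [hcoeff, hbdef]; field_simp; exact ha₁def.symm
  have hcancel : v (b * b) + (v a₁ + v a₁) = 0 := by
    have h : v (b * b * (a₁ * a₁)) = v (b * b) + (v a₁ + v a₁) := by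
      rw [v.map_mul, v.map_mul, v.map_mul]
    have h1 : b * b * (a₁ * a₁) = 1 := by rw [hbdef]; field_simp
    rw [← h, h1, v.map_one]
  have hv0 : 0 < v (f.coeff 0) := by
    rw [hcoeff0, v.map_mul]
    calc (0 : WithTop ℤ) = v (b * b) + (v a₁ + v a₁) := hcancel.symm
    _ < v (b * b) + v (F.coeff 0) := WithTop.add_lt_add_left hvbb h01
  have hfV : ∀ k, 0 ≤ v (f.coeff k) := by
    intro k
    match k with
    | 0 => exact hv0.le
    | 1 => rw [hcoeff1]; simp
    | (n + 2) =>
        have : f.coeff (n + 2) = a₁ ^ n * F.coeff (n + 2) := by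
          rw [hcoeff, hbdef]
          have : a₁ ^ (n + 2) = a₁ ^ n * (a₁ * a₁) := by ring
          rw [this]
          field_simp
        rw [this, v.map_mul, v.map_pow]
        exact add_nonneg (nsmul_nonneg (hFV 1) n) (hFV (n + 2))
  -- apply Hensel at 0
  have heval0 : f.eval 0 = f.coeff 0 := (coeff_zero_eq_eval_zero f).symm
  have hderiv : f.derivative.eval 0 = 1 := by
    rw [← coeff_zero_eq_eval_zero, coeff_derivative, hcoeff1]
    simp
  obtain ⟨α, ⟨hα0, hαpos⟩, huniq⟩ :=
    hhens f hfV 0 (by simp) (by rw [heval0]; exact hv0) (by rw [hderiv]; simp)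
  rw [sub_zero] at hαpos
  have hαpos' := hαpos
  -- relation between f and F evaluations
  have hevalrel : ∀ x : K, f.eval x = b * b * F.eval (a₁ * x) := by
    intro x
    rw [hfdef]
    simp [eval_comp]
  -- v α = v (f.coeff 0)
  have hvα : v (f.coeff 0) = v α := by
    have hkey : α * (f.divX.eval α) + f.coeff 0 = 0 := by
      calc α * f.divX.eval α + f.coeff 0 = (X * f.divX + C (f.coeff 0)).eval α := by
            rw [eval_add, eval_mul, eval_X, eval_C]
      _ = f.eval α := by rw [X_mul_divX_add]
      _ = 0 := hα0
    have hdivX : f.divX.eval α = 1 + α * (f.divX.divX.eval α) := by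
      have h10 : f.divX.coeff 0 = 1 := by rw [coeff_divX, hcoeff1]
      calc f.divX.eval α = (X * f.divX.divX + C (f.divX.coeff 0)).eval α := by
            rw [X_mul_divX_add]
      _ = α * f.divX.divX.eval α + 1 := by rw [eval_add, eval_mul, eval_X, eval_C, h10]
      _ = 1 + α * f.divX.divX.eval α := by ring
    have hvh : 0 ≤ v (f.divX.divX.eval α) := by
      refine eval_val_nonneg v _ (fun k => ?_) hαpos.le
      rw [coeff_divX, coeff_divX]
      exact hfV (k + 1 + 1)
    have hvg : v (f.divX.eval α) = 0 := by
      rw [hdivX]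
      have : (0 : WithTop ℤ) < v (α * f.divX.divX.eval α) := by
        rw [v.map_mul]
        calc (0 : WithTop ℤ) < v α := hαpos
        _ = v α + 0 := by simp
        _ ≤ v α + v (f.divX.divX.eval α) := add_le_add (le_refl _) hvh
      have := v.map_add_eq_of_lt_left (x := (1 : K)) (y := α * f.divX.divX.eval α)
        (by rwa [v.map_one])
      rwa [v.map_one] at this
    have : f.coeff 0 = -(α * f.divX.eval α) := by linear_combination hkey
    rw [this, v.map_neg, v.map_mul, hvg, add_zero]
  refine ⟨a₁ * α, ?_, ?_, ?_, ?_⟩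
  · -- F.eval ξ = 0
    have := hevalrel α
    rw [hα0] at this
    exact (mul_eq_zero.mp this.symm).resolve_left hbb
  · -- v (F.coeff 0) ≤ v a₁ + v (a₁ * α)
    have : v a₁ + v (a₁ * α) = v (F.coeff 0) := by
      rw [v.map_mul, ← hvα, hcoeff0, v.map_mul, v.map_mul]
      have h2 : v a₁ + (v a₁ + (v b + v b + v (F.coeff 0)))
          = (v (b * b) + (v a₁ + v a₁)) + v (F.coeff 0) := by
        rw [v.map_mul]; abel
      rw [h2, hcancel, zero_add]
    exact this.ge
  · -- v a₁ < v (a₁ * α)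
    rw [v.map_mul]
    calc v a₁ = v a₁ + 0 := by simp
    _ < v a₁ + v α := WithTop.add_lt_add_left hva1 hαpos
  · -- uniqueness
    intro ξ' hξ'0 hξ'v
    have hfα' : f.eval (b * ξ') = 0 := by
      rw [hevalrel]
      have : a₁ * (b * ξ') = ξ' := by rw [hbdef]; field_simp
      rw [this, hξ'0, mul_zero]
    have hvα' : 0 < v (b * ξ') := by
      rw [v.map_mul]
      have h1 : v b + v a₁ = 0 := by
        rw [← v.map_mul]
        have : b * a₁ = 1 := by rw [hbdef]; field_simp
        rw [this, v.map_one]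
      calc (0 : WithTop ℤ) = v b + v a₁ := h1.symm
      _ < v b + v ξ' := WithTop.add_lt_add_left hvb hξ'v
    have heq : b * ξ' = α := huniq (b * ξ') ⟨hfα', by rwa [sub_zero]⟩
    have : a₁ * (b * ξ') = a₁ * α := by rw [heq]
    rwa [hbdef, mul_inv_cancel_left₀ ha1] at this
end

section
/- Let K be a field, (f₁,…,fₙ) polynomials in K[X₁,…,Xₙ] such that the Jacobian determinant is invertible in D := K[X₁,…,Xₙ]/⟨f₁,…,fₙ⟩ (an étale polynomial system), and let L be an algebraically closed field extension of K. Then every common zero α ∈ Lⁿ of the system has all coordinates separably algebraic over K, and is a simple zero: the Jacobian determinant does not vanish at α. -/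
open MvPolynomial

universe u v

/-- If a matrix with unit determinant annihilates a vector of module elements,
the vector is zero. -/
lemma aux_matrix_zero {R M : Type*} [CommRing R] [AddCommGroup M] [Module R M] {n : ℕ}
    (J : Matrix (Fin n) (Fin n) R) (hJ : IsUnit J.det) (ω : Fin n → M)
    (h : ∀ j, ∑ i, J j i • ω i = 0) (k : Fin n) : ω k = 0 := by
  have hdet : J.det • ω k = 0 := by
    have e1 : J.det • ω k = ∑ i, (J.adjugate * J) k i • ω i := by
      rw [Matrix.adjugate_mul]
      simp [Matrix.smul_apply, Matrix.one_apply, smul_smul, Finset.sum_ite_eq, ite_smul]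
    rw [e1]
    simp only [Matrix.mul_apply, Finset.sum_smul, mul_smul]
    rw [Finset.sum_comm]
    simp [← Finset.smul_sum, h]
  have h1 : ((hJ.unit⁻¹ : Rˣ) : R) * J.det = 1 := by
    simpa only [IsUnit.unit_spec] using hJ.unit.inv_mul
  calc ω k = (((hJ.unit⁻¹ : Rˣ) : R) * J.det) • ω k := by rw [h1, one_smul]
    _ = ((hJ.unit⁻¹ : Rˣ) : R) • (J.det • ω k) := by rw [mul_smul]
    _ = 0 := by rw [hdet, smul_zero]

/-- An étale polynomial system over a field presents a formally unramified algebra. -/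
lemma aux_unramified {K : Type*} [Field K] {n : ℕ} (f : Fin n → MvPolynomial (Fin n) K)
    (hetale : IsUnit (Ideal.Quotient.mk (Ideal.span (Set.range f))
      (Matrix.det (Matrix.of fun i j : Fin n => MvPolynomial.pderiv j (f i))))) :
    Algebra.FormallyUnramified K (MvPolynomial (Fin n) K ⧸ Ideal.span (Set.range f)) := by
  constructor
  letI : IsScalarTower (MvPolynomial (Fin n) K)
      (MvPolynomial (Fin n) K ⧸ Ideal.span (Set.range f))
      (KaehlerDifferential K (MvPolynomial (Fin n) K ⧸ Ideal.span (Set.range f))) :=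
    KaehlerDifferential.isScalarTower_of_tower (R := K)
      (S := MvPolynomial (Fin n) K ⧸ Ideal.span (Set.range f))
      (R₁ := MvPolynomial (Fin n) K)
      (R₂ := MvPolynomial (Fin n) K ⧸ Ideal.span (Set.range f))
  letI : IsScalarTower K (MvPolynomial (Fin n) K)
      (KaehlerDifferential K (MvPolynomial (Fin n) K ⧸ Ideal.span (Set.range f))) :=
    KaehlerDifferential.isScalarTower_of_tower (R := K)
      (S := MvPolynomial (Fin n) K ⧸ Ideal.span (Set.range f))
      (R₁ := K) (R₂ := MvPolynomial (Fin n) K)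
  let P := MvPolynomial (Fin n) K
  let D := MvPolynomial (Fin n) K ⧸ Ideal.span (Set.range f)
  let Ω := KaehlerDifferential K D
  let d : Derivation K P Ω := (KaehlerDifferential.D K D).compAlgebraMap P
  let ω : Fin n → Ω := fun i => d (X i)
  let d' : Derivation K P Ω :=
    ∑ i, (LinearMap.toSpanSingleton P Ω (ω i)).compDer (pderiv i)
  have hsum : ∀ p : P, d' p = ∑ i, (pderiv i p : P) • ω i := by
    intro p
    show (∑ i, (LinearMap.toSpanSingleton P Ω (ω i)).compDer (pderiv i)) p = _
    induction (Finset.univ : Finset (Fin n)) using Finset.induction with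
    | empty => simp
    | insert _ _ hx ih =>
        rw [Finset.sum_insert hx, Finset.sum_insert hx, Derivation.add_apply, ih]
        rfl
  have hdd' : d = d' := by
    apply MvPolynomial.derivation_ext
    intro j
    rw [hsum]
    classical
    simp [ω, pderiv_X, Pi.single_apply, ite_smul]
  have hrel : ∀ j, ∑ i,
      (Ideal.Quotient.mk (Ideal.span (Set.range f)) (pderiv i (f j))) • ω i = 0 := by
    intro j
    have h0 : d (f j) = 0 := by
      show (KaehlerDifferential.D K D) (algebraMap P D (f j)) = 0
      have : algebraMap P D (f j) = 0 := by
        rw [Ideal.Quotient.algebraMap_eq, Ideal.Quotient.eq_zero_iff_mem]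
        exact Ideal.subset_span ⟨j, rfl⟩
      rw [this, map_zero]
    rw [hdd', hsum] at h0
    rw [← h0]
    exact Finset.sum_congr rfl fun i _ => by
      rw [← Ideal.Quotient.algebraMap_eq]; exact algebraMap_smul D (pderiv i (f j) : P) (ω i)
  have hωzero : ∀ k, ω k = 0 := by
    apply aux_matrix_zero (J := Matrix.of fun j i : Fin n =>
      (Ideal.Quotient.mk (Ideal.span (Set.range f)) (pderiv i (f j))))
    · rw [show (Matrix.of fun j i : Fin n =>
          (Ideal.Quotient.mk (Ideal.span (Set.range f)) (pderiv i (f j)))) =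
        (Ideal.Quotient.mk (Ideal.span (Set.range f))).mapMatrix
          (Matrix.of fun i j : Fin n => pderiv j (f i)) from rfl, ← RingHom.map_det]
      exact hetale
    · exact hrel
  have hall : ∀ x : D, KaehlerDifferential.D K D x = 0 := by
    intro x
    obtain ⟨p, rfl⟩ := Ideal.Quotient.mk_surjective x
    have e : KaehlerDifferential.D K D (Ideal.Quotient.mk (Ideal.span (Set.range f)) p)
        = d p := by
      show _ = (KaehlerDifferential.D K D) (algebraMap P D p)
      rw [Ideal.Quotient.algebraMap_eq]
    rw [e, hdd', hsum]
    simp [hωzero]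
  have hzero : ∀ z : Ω, z = 0 := by
    intro z
    have hz : z ∈ (⊤ : Submodule D Ω) := trivial
    rw [← KaehlerDifferential.span_range_derivation] at hz
    have hle : Submodule.span D (Set.range (KaehlerDifferential.D K D)) ≤ ⊥ := by
      rw [Submodule.span_le]
      rintro _ ⟨w, rfl⟩
      simp [hall w]
    simpa using hle hz
  exact ⟨fun x y => (hzero x).trans (hzero y).symm⟩

/-- Universe-polymorphic version of `Algebra.FormallyUnramified.isSeparable`. -/
lemma aux_sep {K : Type u} {A : Type v} [Field K] [Field A] [Algebra K A]
    [Algebra.FormallyUnramified K A] [Algebra.FiniteType K A] [Module.Finite K A] :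
    Algebra.IsSeparable K A := by
  haveI : Small.{u} A :=
    ⟨⟨Fin (Module.finrank K A) → K, ⟨(Module.finBasis K A).equivFun.toEquiv⟩⟩⟩
  let B := Shrink.{u} A
  let ealg : B ≃ₐ[K] A := Shrink.algEquiv K A
  haveI : Algebra.FormallyUnramified K B :=
    Algebra.FormallyUnramified.of_surjective ealg.symm.toAlgHom ealg.symm.surjective
  haveI : Algebra.FiniteType K B :=
    Algebra.FiniteType.of_surjective ealg.symm.toAlgHom ealg.symm.surjective
  haveI : Algebra.EssFiniteType K B := Algebra.EssFiniteType.of_finiteType K B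
  haveI : Algebra.IsSeparable K B := Algebra.FormallyUnramified.isSeparable K B
  exact AlgEquiv.Algebra.isSeparable ealg

/-- Zeroes of an étale polynomial system over a field `K` in an algebraically closed
extension `L` have coordinates separably algebraic over `K` and are simple: the Jacobian
determinant does not vanish there. -/
theorem etale_system_zeros_separable {K L : Type*} [Field K] [Field L] [Algebra K L]
    [IsAlgClosed L]
    {n : ℕ} (f : Fin n → MvPolynomial (Fin n) K)
    (JacPoly : MvPolynomial (Fin n) K)
    (hJac : JacPoly = Matrix.det (Matrix.of fun i j : Fin n => MvPolynomial.pderiv j (f i)))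
    (hetale : IsUnit (Ideal.Quotient.mk (Ideal.span (Set.range f)) JacPoly))
    (α : Fin n → L) (hα : ∀ i, MvPolynomial.aeval α (f i) = 0) :
    (∀ i, IsIntegral K (α i) ∧ (minpoly K (α i)).Separable) ∧
      MvPolynomial.aeval α JacPoly ≠ 0 := by
  haveI := aux_unramified f (hJac ▸ hetale)
  -- the evaluation morphism on the quotient algebra
  have hker : ∀ a ∈ Ideal.span (Set.range f), aeval α a = 0 := by
    intro a ha
    induction ha using Submodule.span_induction with
    | mem x hx => obtain ⟨i, rfl⟩ := hx; exact hα i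
    | zero => simp
    | add x y _ _ hx hy => simp [hx, hy]
    | smul c x _ hx => simp [smul_eq_mul, hx]
  let φ : (MvPolynomial (Fin n) K ⧸ Ideal.span (Set.range f)) →ₐ[K] L :=
    Ideal.Quotient.liftₐ _ (aeval α) hker
  have hφ : ∀ p : MvPolynomial (Fin n) K,
      φ (Ideal.Quotient.mk (Ideal.span (Set.range f)) p) = aeval α p := fun p =>
    Ideal.Quotient.liftₐ_apply _ _ _ _
  -- the Jacobian does not vanish at α
  have h2 : aeval α JacPoly ≠ 0 := by
    have hu : IsUnit (φ (Ideal.Quotient.mk (Ideal.span (Set.range f)) JacPoly)) :=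
      hetale.map φ
    rw [hφ] at hu
    exact hu.ne_zero
  -- the image of φ is a finite separable field extension of K
  haveI : Algebra.FiniteType K (MvPolynomial (Fin n) K ⧸ Ideal.span (Set.range f)) :=
    Algebra.FiniteType.of_surjective
      (Ideal.Quotient.mkₐ K (Ideal.span (Set.range f)))
      (Ideal.Quotient.mkₐ_surjective K _)
  haveI : Algebra.FormallyUnramified K φ.range :=
    Algebra.FormallyUnramified.of_surjective φ.rangeRestrict φ.rangeRestrict_surjective
  haveI : Algebra.FiniteType K φ.range :=
    Algebra.FiniteType.of_surjective φ.rangeRestrict φ.rangeRestrict_surjective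
  haveI : Algebra.EssFiniteType K φ.range := Algebra.EssFiniteType.of_finiteType K φ.range
  haveI : Module.Free K φ.range := Module.Free.of_divisionRing K ↥φ.range
  haveI : Module.Finite K φ.range := Algebra.FormallyUnramified.finite_of_free K ↥φ.range
  haveI : Algebra.IsIntegral K φ.range := Algebra.IsIntegral.of_finite K φ.range
  have hfield : IsField φ.range :=
    isField_of_isIntegral_of_isField' (Field.toIsField K)
  letI : Field φ.range := hfield.toField
  haveI : Algebra.IsSeparable K φ.range := aux_sep
  refine ⟨fun i => ?_, h2⟩
  have hmem : α i ∈ φ.range := by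
    refine ⟨Ideal.Quotient.mk (Ideal.span (Set.range f)) (X i), ?_⟩
    show φ (Ideal.Quotient.mk (Ideal.span (Set.range f)) (X i)) = α i
    rw [hφ]; simp
  let a : φ.range := ⟨α i, hmem⟩
  have hsep : IsSeparable K a := Algebra.IsSeparable.isSeparable K a
  have hmin : minpoly K (φ.range.val a) = minpoly K a :=
    minpoly.algHom_eq φ.range.val Subtype.val_injective a
  constructor
  · exact IsIntegral.map φ.range.val (Algebra.IsIntegral.isIntegral a)
  · show (minpoly K (φ.range.val a)).Separable
    rw [hmin]
    exact hsep
end
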